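/- arXiv:2206.07239 — 6 statements merged into one kernel-verified Lean document; each statement's English description precedes it below -/
import Mathlib

section
/- For every β ∈ (0,1), the probability that Y(t) ≤ n·β⁻¹·G(t) holds simultaneously for all t ∈ [0, τₙ] is at least 1 − β. -/
/-!
Let `G` be the survival function of `U₁`. The variables `Wᵢ = G(Uᵢ)` are independent and
super-uniform, `ℙ(Wᵢ < x) ≤ x`, and if `Y(t) > n β⁻¹ G(t)` then `k = Y(t)` of them lie
below `β k / n`. So it suffices to show that the count `S_k = #{i : Wᵢ < β k / n}` reaches `k`
for some `k ≥ 1` with probability at most `β`. Split this event according to the last crossing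
`k` (`S_k = k` and `S_j < j` for `j > k`). On `{Wᵢ < β k / n}` the last-crossing event is a
last-crossing event `Rᵢₖ` of the other `n - 1` variables, hence independent of `Wᵢ`; since
exactly `k` indices lie below the threshold, `k ℙ(last crossing at k) ≤ (β k / n) ∑ᵢ ℙ(Rᵢₖ)`.
For fixed `i` the events `Rᵢₖ` are disjoint in `k`, so the total is at most `β`.
-/

open MeasureTheory ProbabilityTheory Set Finset Function
open scoped ENNReal

theorem measure_preimage_survival_lt_le {Ω : Type*} [MeasurableSpace Ω] (μ : Measure Ω)
    [IsFiniteMeasure μ] (X : Ω → ℝ) (x : ℝ) :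
    μ (X ⁻¹' {t | (μ {ω | t ≤ X ω}).toReal < x}) ≤ ENNReal.ofReal x := by
  -- `A` is an upper set, so `X ⁻¹' A` is the union of the chain `{t ≤ X}`, `t ∈ A`.
  set A := {t | (μ {ω | t ≤ X ω}).toReal < x}
  have hA : IsUpperSet A := fun s t hst hs =>
    (ENNReal.toReal_mono (measure_ne_top μ _) (measure_mono fun ω => hst.trans)).trans_lt hs
  have := hA.ordConnected
  have hcover : X ⁻¹' A = ⋃ t : A, {ω | (t : ℝ) ≤ X ω} := by
    ext ω
    exact ⟨fun h => mem_iUnion.2 ⟨⟨X ω, h⟩, le_refl (X ω)⟩,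
      fun h => let ⟨t, ht⟩ := mem_iUnion.1 h; hA ht t.2⟩
  have hanti : Antitone fun t : A => {ω | (t : ℝ) ≤ X ω} :=
    fun s t hst ω (h : (t : ℝ) ≤ X ω) => show (s : ℝ) ≤ X ω from le_trans hst h
  rw [hcover, hanti.measure_iUnion]
  refine iSup_le fun t => ?_
  rw [← ENNReal.ofReal_toReal (measure_ne_top μ _)]
  exact ENNReal.ofReal_le_ofReal t.2.le

section CountBelow

variable {κ : Type*} [Fintype κ]

noncomputable def countBelow (x : κ → ℝ) (c : ℝ) : ℕ := #{i | x i < c}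

theorem countBelow_mono (x : κ → ℝ) : Monotone (countBelow x) := fun _ _ hcd =>
  card_le_card <| monotone_filter_right _ fun _ _ hi => lt_of_lt_of_le hi hcd

theorem countBelow_le_card (x : κ → ℝ) (c : ℝ) : countBelow x c ≤ Fintype.card κ :=
  card_filter_le _ _

theorem measurable_countBelow (c : ℝ) : Measurable fun x : κ → ℝ => countBelow x c := by
  simp only [countBelow, card_filter]
  exact Finset.measurable_sum _ fun i _ =>
    Measurable.ite (measurableSet_lt (measurable_pi_apply i) measurable_const) measurable_const
      measurable_const

theorem countBelow_eq_countBelow_erase_add_one [DecidableEq κ] {x : κ → ℝ} {c : ℝ} {i : κ}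
    (hi : x i < c) :
    countBelow x c = countBelow (fun t : ↥(univ.erase i) => x t) c + 1 := by
  simp only [countBelow, card_filter]
  rw [← add_sum_erase _ _ (mem_univ i), if_pos hi, add_comm, ← sum_coe_sort (univ.erase i)]

end CountBelow

def IsLastCrossing (f : ℕ → ℕ) (k : ℕ) : Prop :=
  f k = k ∧ ∀ j, k < j → f j < j

namespace IsLastCrossing

theorem eq {f : ℕ → ℕ} {a b : ℕ} (ha : IsLastCrossing f a) (hb : IsLastCrossing f b) :
    a = b := by
  by_contra hab
  rcases Nat.lt_or_gt_of_ne hab with h | h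
  · exact (ha.2 b h).ne hb.1
  · exact (hb.2 a h).ne ha.1

theorem congr {f g : ℕ → ℕ} {k : ℕ} (h : ∀ j, k ≤ j → f j = g j) :
    IsLastCrossing f k ↔ IsLastCrossing g k := by
  unfold IsLastCrossing
  rw [h k le_rfl]
  exact and_congr_right' <| forall_congr' fun j =>
    imp_congr_right fun hj => by rw [h j hj.le]

theorem le_of_le {f : ℕ → ℕ} {k N : ℕ} (hk : IsLastCrossing f k) (hN : ∀ j, f j ≤ N) :
    k ≤ N :=
  hk.1 ▸ hN k

end IsLastCrossing

theorem exists_isLastCrossing {f : ℕ → ℕ} {N : ℕ} (hf : Monotone f) (hN : ∀ j, f j ≤ N)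
    {k : ℕ} (hk : 0 < k) (hkf : k ≤ f k) : ∃ m, 0 < m ∧ IsLastCrossing f m := by
  have hkN : k ≤ N := hkf.trans (hN k)
  set m := Nat.findGreatest (fun j => j ≤ f j) N
  have hm : m ≤ f m := Nat.findGreatest_spec (P := fun j => j ≤ f j) hkN hkf
  have hafter : ∀ j, m < j → f j < j := fun j hj => by
    by_cases hjN : j ≤ N
    · exact not_le.1 (Nat.findGreatest_is_greatest (P := fun j => j ≤ f j) hj hjN)
    · exact (hN j).trans_lt (not_le.1 hjN)
  refine ⟨m, hk.trans_le (Nat.le_findGreatest hkN hkf), le_antisymm ?_ hm, hafter⟩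
  exact Nat.le_of_lt_succ ((hf m.le_succ).trans_lt (hafter _ m.lt_succ_self))

theorem measurableSet_isLastCrossing {α : Type*} [MeasurableSpace α] {F : ℕ → α → ℕ}
    (hF : ∀ j, Measurable (F j)) (k : ℕ) :
    MeasurableSet {a | IsLastCrossing (fun j => F j a) k} := by
  unfold IsLastCrossing
  measurability

theorem pairwise_disjoint_isLastCrossing {α : Type*} (F : ℕ → α → ℕ) :
    Pairwise (Disjoint on fun k => {a | IsLastCrossing (fun j => F j a) k}) :=
  fun _ _ hab => Set.disjoint_left.2 fun a ha hb =>
    hab (IsLastCrossing.eq (f := fun j => F j a) ha hb)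

theorem sum_measure_inter_eq_mul {Ω ι : Type*} [MeasurableSpace Ω] [Fintype ι] (μ : Measure Ω)
    {A : ι → Set Ω} [∀ ω, DecidablePred fun i => ω ∈ A i]
    (hA : ∀ i, MeasurableSet (A i)) {D : Set Ω} (hD : MeasurableSet D) {k : ℕ}
    (hk : ∀ ω ∈ D, #{i | ω ∈ A i} = k) :
    ∑ i, μ (D ∩ A i) = k * μ D := calc
  ∑ i, μ (D ∩ A i) = ∑ i, ∫⁻ ω in D, (A i).indicator 1 ω ∂μ := by
    simp only [lintegral_indicator_one (hA _), Measure.restrict_apply (hA _), inter_comm]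
  _ = ∫⁻ ω in D, ∑ i, (A i).indicator 1 ω ∂μ :=
    (lintegral_finsetSum _ fun i _ => measurable_one.indicator (hA i)).symm
  _ = ∫⁻ _ in D, (k : ℝ≥0∞) ∂μ := setLIntegral_congr_fun hD fun ω hω => by
    simp only [indicator_apply, Pi.one_apply, sum_boole, hk ω hω]
  _ = k * μ D := setLIntegral_const D k

theorem ProbabilityTheory.iIndepFun.measure_preimage_erase_inter_eq_mul {Ω ι β : Type*}
    [MeasurableSpace Ω] [MeasurableSpace β] [DecidableEq ι] {μ : Measure Ω}
    {W : ι → Ω → β} (hindep : iIndepFun W μ) (hmeas : ∀ i, Measurable (W i))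
    {s : Finset ι} {i : ι}
    {B : Set (↥(s.erase i) → β)} (hB : MeasurableSet B) {C : Set β}
    (hC : MeasurableSet C) :
    μ ((fun ω (t : ↥(s.erase i)) => W t ω) ⁻¹' B ∩ W i ⁻¹' C) =
      μ ((fun ω (t : ↥(s.erase i)) => W t ω) ⁻¹' B) * μ (W i ⁻¹' C) := by
  have hsplit := hindep.indepFun_finset (s.erase i) {i}
    (disjoint_singleton_right.2 (notMem_erase i s)) hmeas
  exact (hsplit.comp measurable_id (measurable_pi_apply
    (⟨i, mem_singleton_self i⟩ : ↥({i} : Finset ι)))).measure_inter_preimage_eq_mul B C hB hC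

section Daniels

variable {Ω ι : Type*} [MeasurableSpace Ω] {μ : Measure Ω} [Fintype ι] {W : ι → Ω → ℝ}

theorem mul_measure_isLastCrossing_le [DecidableEq ι] (hmeas : ∀ i, Measurable (W i))
    (hindep : iIndepFun W μ) (hW : ∀ i x, μ {ω | W i ω < x} ≤ ENNReal.ofReal x)
    {c : ℕ → ℝ} (hc : Monotone c) (k : ℕ) :
    k * μ {ω | IsLastCrossing (fun j => countBelow (W · ω) (c j)) k} ≤
      ENNReal.ofReal (c k) * ∑ i : ι, μ {ω | IsLastCrossing
        (fun j => countBelow (fun t : ↥(univ.erase i) => W t ω) (c j) + 1) k} := by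
  set D := {ω | IsLastCrossing (fun j => countBelow (W · ω) (c j)) k}
  set R := fun i : ι => {ω | IsLastCrossing
    (fun j => countBelow (fun t : ↥(univ.erase i) => W t ω) (c j) + 1) k}
  set A := fun i => {ω | W i ω < c k}
  have hD : MeasurableSet D := measurableSet_isLastCrossing
    (fun j => (measurable_countBelow _).comp (measurable_pi_lambda _ hmeas)) k
  have hDA : ∀ i, D ∩ A i = R i ∩ A i := fun i => by
    ext ω
    refine and_congr_left fun hi => ?_
    exact IsLastCrossing.congr fun j hj =>
      countBelow_eq_countBelow_erase_add_one (hi.trans_le (hc hj))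
  have hRA : ∀ i, μ (R i ∩ A i) = μ (R i) * μ (A i) := fun i =>
    hindep.measure_preimage_erase_inter_eq_mul hmeas
      (measurableSet_isLastCrossing (fun j => (measurable_countBelow _).add_const 1) k)
      measurableSet_Iio
  calc k * μ D = ∑ i, μ (D ∩ A i) := (sum_measure_inter_eq_mul μ (A := A)
        (fun i => (hmeas i) measurableSet_Iio) hD fun _ hω => hω.1).symm
    _ = ∑ i, μ (R i) * μ (A i) := by simp only [hDA, hRA]
    _ ≤ ∑ i, μ (R i) * ENNReal.ofReal (c k) := by gcongr with i; exact hW i (c k)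
    _ = ENNReal.ofReal (c k) * ∑ i, μ (R i) := by rw [← sum_mul, mul_comm]

theorem measure_exists_le_countBelow_le [IsProbabilityMeasure μ]
    (hmeas : ∀ i, Measurable (W i)) (hindep : iIndepFun W μ)
    (hW : ∀ i x, μ {ω | W i ω < x} ≤ ENNReal.ofReal x) {β : ℝ} (hβ : 0 ≤ β) :
    μ {ω | ∃ k : ℕ, 0 < k ∧ k ≤ countBelow (W · ω) (β * k / Fintype.card ι)} ≤
      ENNReal.ofReal β := by
  classical
  set n := Fintype.card ι
  set c : ℕ → ℝ := fun k => β * k / n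
  have hc : Monotone c := fun a b hab => by
    simp only [c]
    gcongr
  set D := fun k => {ω | IsLastCrossing (fun j => countBelow (W · ω) (c j)) k}
  set R := fun (i : ι) k => {ω | IsLastCrossing
    (fun j => countBelow (fun t : ↥(univ.erase i) => W t ω) (c j) + 1) k}
  have hcover : {ω | ∃ k : ℕ, 0 < k ∧ k ≤ countBelow (W · ω) (c k)} ⊆
      ⋃ k ∈ Finset.Icc 1 n, D k := by
    rintro ω ⟨k, hk, hkS⟩
    obtain ⟨m, hm, hlast⟩ := exists_isLastCrossing ((countBelow_mono _).comp hc)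
      (fun j => countBelow_le_card _ (c j)) hk hkS
    have hmn : m ≤ n := hlast.le_of_le fun j => countBelow_le_card _ (c j)
    exact mem_biUnion (Finset.mem_Icc.2 ⟨hm, hmn⟩) hlast
  have hlevel :
      ∀ k ∈ Finset.Icc 1 n, μ (D k) ≤ ENNReal.ofReal (β / n) * ∑ i, μ (R i k) := by
    intro k hk
    have hk0 : (k : ℝ≥0∞) ≠ 0 :=
      Nat.cast_ne_zero.2 (Nat.one_le_iff_ne_zero.1 (Finset.mem_Icc.1 hk).1)
    have hck : ENNReal.ofReal (c k) = k * ENNReal.ofReal (β / n) := by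
      rw [← ENNReal.ofReal_natCast, ← ENNReal.ofReal_mul (Nat.cast_nonneg k)]
      congr 1
      ring
    refine (ENNReal.mul_le_mul_iff_right hk0 (ENNReal.natCast_ne_top k)).1 ?_
    calc k * μ (D k) ≤ ENNReal.ofReal (c k) * ∑ i, μ (R i k) :=
          mul_measure_isLastCrossing_le hmeas hindep hW hc k
      _ = k * (ENNReal.ofReal (β / n) * ∑ i, μ (R i k)) := by rw [hck, mul_assoc]
  have hR : ∀ i, ∑ k ∈ Finset.Icc 1 n, μ (R i k) ≤ 1 := fun i => by
    have hdisj : PairwiseDisjoint ↑(Finset.Icc 1 n) (R i) :=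
      (pairwise_disjoint_isLastCrossing fun j ω =>
        countBelow (fun t : ↥(Finset.univ.erase i) => W t ω) (c j) + 1).set_pairwise _
    have hmeasR : ∀ k ∈ Finset.Icc 1 n, MeasurableSet (R i k) := fun k _ =>
      measurableSet_isLastCrossing (fun j => ((measurable_countBelow (c j)).comp
        (measurable_pi_lambda (fun ω (t : ↥(Finset.univ.erase i)) => W t ω) fun t => hmeas t)
        ).add_const 1) k
    rw [← measure_biUnion_finset hdisj hmeasR]
    exact prob_le_one
  calc μ {ω | ∃ k : ℕ, 0 < k ∧ k ≤ countBelow (W · ω) (c k)}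
      ≤ ∑ k ∈ Finset.Icc 1 n, μ (D k) :=
        (measure_mono hcover).trans (measure_biUnion_finset_le _ _)
    _ ≤ ∑ k ∈ Finset.Icc 1 n, ENNReal.ofReal (β / n) * ∑ i, μ (R i k) := sum_le_sum hlevel
    _ = ENNReal.ofReal (β / n) * ∑ i, ∑ k ∈ Finset.Icc 1 n, μ (R i k) := by
        rw [← mul_sum, sum_comm]
    _ ≤ ENNReal.ofReal (β / n) * n := by
      gcongr
      simpa using sum_le_sum fun i (_ : i ∈ Finset.univ) => hR i
    _ ≤ ENNReal.ofReal β := by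
      rcases eq_or_ne n 0 with hn | hn
      · simp [hn]
      · rw [← ENNReal.ofReal_natCast, ← ENNReal.ofReal_mul (by positivity),
          div_mul_cancel₀ β (Nat.cast_ne_zero.2 hn)]

end Daniels

theorem exists_le_countBelow_of_lt {κ : Type*} [Fintype κ] {G : ℝ → ℝ} (hG : Antitone G)
    (hG0 : ∀ t, 0 ≤ G t) {β : ℝ} (hβ : 0 < β) {u : κ → ℝ} {t : ℝ}
    (ht : Fintype.card κ * β⁻¹ * G t < #{i | t ≤ u i}) :
    ∃ k : ℕ, 0 < k ∧ k ≤ countBelow (G ∘ u) (β * k / Fintype.card κ) := by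
  set k := #{i | t ≤ u i}
  have hk : 0 < k := by
    have : (0 : ℝ) ≤ Fintype.card κ * β⁻¹ * G t := by have := hG0 t; positivity
    exact_mod_cast this.trans_lt ht
  have hGt : G t < β * k / Fintype.card κ := by
    have hκ : (0 : ℝ) < Fintype.card κ := by exact_mod_cast hk.trans_le (card_filter_le _ _)
    rw [lt_div_iff₀ hκ]
    calc G t * Fintype.card κ = β * (Fintype.card κ * β⁻¹ * G t) := by field_simp
      _ < β * k := mul_lt_mul_of_pos_left ht hβ
  exact ⟨k, hk, card_le_card (monotone_filter_right _ fun i _ hi => (hG hi).trans_lt hGt)⟩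

theorem atRisk_upper_bound_general {Ω : Type*} [MeasurableSpace Ω]
    (μ : Measure Ω) [IsProbabilityMeasure μ]
    {n : ℕ} (hn : 0 < n) (U : Fin n → Ω → ℝ)
    (hmeas : ∀ i, Measurable (U i))
    (hindep : iIndepFun U μ)
    (hident : ∀ i, IdentDistrib (U i) (U ⟨0, hn⟩) μ μ)
    (β : ℝ) (hβ : β ∈ Set.Ioo (0 : ℝ) 1) :
    ENNReal.ofReal (1 - β) ≤
      μ {ω | ∀ t ∈ Set.Icc (0 : ℝ) (⨆ i, U i ω),
        ((Finset.univ.filter (fun i => t ≤ U i ω)).card : ℝ) ≤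
          (n : ℝ) * β⁻¹ * (μ {ω' | t ≤ U ⟨0, hn⟩ ω'}).toReal} := by
  set G : ℝ → ℝ := fun t => (μ {ω | t ≤ U ⟨0, hn⟩ ω}).toReal
  have hG : Antitone G := fun s t hst =>
    ENNReal.toReal_mono (measure_ne_top μ _) (measure_mono fun ω => hst.trans)
  have hW : ∀ i x, μ {ω | G (U i ω) < x} ≤ ENNReal.ofReal x := fun i x =>
    ((hident i).measure_mem_eq (hG.measurable measurableSet_Iio)).trans_le
      (measure_preimage_survival_lt_le μ _ x)
  have hbad := measure_exists_le_countBelow_le (fun i => hG.measurable.comp (hmeas i))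
    (hindep.comp (fun _ => G) fun _ => hG.measurable) hW hβ.1.le
  rw [ENNReal.ofReal_sub _ hβ.1.le, ENNReal.ofReal_one, tsub_le_iff_right,
    ← measure_univ (μ := μ)]
  refine (measure_univ_le_add_compl _).trans (add_le_add le_rfl ((measure_mono ?_).trans hbad))
  intro ω hω
  obtain ⟨t, -, ht⟩ := not_forall₂.1 hω
  exact exists_le_countBelow_of_lt (u := fun i => U i ω) hG (fun _ => ENNReal.toReal_nonneg) hβ.1
    (by rw [Fintype.card_fin]; exact not_le.1 ht)

/-- Gill's uniform upper bound for the number-at-risk process: with probability at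
least `1 - β`, the at-risk process `Y(t) = #{i : Uᵢ ≥ t}` satisfies
`Y(t) ≤ n β⁻¹ G(t)` simultaneously for all `t ∈ [0, τₙ]`, where `τₙ = maxᵢ Uᵢ`
and `G(t) = ℙ(U₁ ≥ t)`. -/
theorem atRisk_upper_bound {Ω : Type*} [MeasurableSpace Ω]
    (μ : Measure Ω) [IsProbabilityMeasure μ]
    {n : ℕ} (hn : 0 < n) (U : Fin n → Ω → ℝ)
    (hmeas : ∀ i, Measurable (U i))
    (hindep : iIndepFun U μ)
    (hident : ∀ i, IdentDistrib (U i) (U ⟨0, hn⟩) μ μ)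
    (hnonneg : ∀ i ω, 0 ≤ U i ω)
    (β : ℝ) (hβ : β ∈ Set.Ioo (0 : ℝ) 1) :
    ENNReal.ofReal (1 - β) ≤
      μ {ω | ∀ t ∈ Set.Icc (0 : ℝ) (⨆ i, U i ω),
        ((Finset.univ.filter (fun i => t ≤ U i ω)).card : ℝ) ≤
          (n : ℝ) * β⁻¹ * (μ {ω' | t ≤ U ⟨0, hn⟩ ω'}).toReal} :=
  atRisk_upper_bound_general μ hn U hmeas hindep hident β hβ
end

section
/- The advanced and backward operators are adjoint on L²(F): for all f, g : ℝ → ℝ with f, g ∈ L²(F), one has ∫ (Af)(z)·g(z) dF(z) = ∫ f(z)·(Bg)(z) dF(z). -/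
/-!
Write `S z = F (Ioi z)`. Both sides equal `∫ f g dF` minus the integral over `{z < s}` of the
kernel `S(z)⁻¹ f(s) g(z)`: integrating first in `s` gives the advanced term, first in `z` the
backward one (`Ioc 0 s` and `Iio s` agree `F`-a.e.). So everything rests on Fubini, i.e. on the
integrability of the kernel, which is a Schur test with weight `S^{1/2}`: by AM-GM the kernel is
at most `S(z)^{-3/2} S(s)^{1/2} f(s)² + S(z)^{-1/2} S(s)^{-1/2} g(z)²`, and the tail bounds
`∫_{s > z} S(s)^{-1/2} dF(s) ≲ S(z)^{1/2}` and `∫_{z < s} S(z)^{-3/2} dF(z) ≲ S(s)^{-1/2}` follow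
by cutting into dyadic level sets of `S`, since for atomless `F` one has `F {S ≤ u} ≤ u`.
-/

open MeasureTheory Set
open scoped ENNReal NNReal

lemma ENNReal.mul_le_sq_add_sq (u v : ℝ≥0∞) : u * v ≤ u ^ 2 + v ^ 2 := by
  rcases le_total u v with h | h
  · calc u * v ≤ v * v := by gcongr
      _ ≤ u ^ 2 + v ^ 2 := by rw [← sq]; exact le_add_self
  · calc u * v ≤ u * u := by gcongr
      _ ≤ u ^ 2 + v ^ 2 := by rw [← sq]; exact le_self_add

lemma ENNReal.exists_mem_Icc_mul_two_pow {a x : ℝ≥0∞} (ha : a ≠ 0) (hx : x ≠ ⊤) (hax : a ≤ x) :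
    ∃ k : ℕ, x ∈ Icc (a * 2 ^ k) (2 * (a * 2 ^ k)) := by
  lift x to ℝ≥0 using hx
  lift a to ℝ≥0 using ne_top_of_le_ne_top coe_ne_top hax
  have ha' : 0 < a := pos_iff_ne_zero.2 (by exact_mod_cast ha)
  obtain ⟨k, hk, hk'⟩ := exists_nat_pow_near ((one_le_div ha').2 (by exact_mod_cast hax))
    _root_.one_lt_two
  rw [le_div_iff₀ ha', mul_comm] at hk
  rw [div_lt_iff₀ ha', pow_succ, mul_comm, ← mul_assoc, mul_comm _ 2] at hk'
  exact ⟨k, by exact_mod_cast hk, by exact_mod_cast hk'.le⟩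

lemma ENNReal.exists_mem_Icc_mul_inv_two_pow {a x : ℝ≥0∞} (ha : a ≠ ⊤) (hx : x ≠ 0) (hxa : x ≤ a) :
    ∃ k : ℕ, x ∈ Icc (a * 2⁻¹ ^ k) (2 * (a * 2⁻¹ ^ k)) := by
  lift a to ℝ≥0 using ha
  lift x to ℝ≥0 using ne_top_of_le_ne_top coe_ne_top hxa
  have hx' : 0 < x := pos_iff_ne_zero.2 (by exact_mod_cast hx)
  have ha' : 0 < a := hx'.trans_le (by exact_mod_cast hxa)
  obtain ⟨k, hk, hk'⟩ := exists_nat_pow_near_of_lt_one (div_pos hx' ha')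
    ((div_le_one ha').2 (by exact_mod_cast hxa)) (inv_pos.2 two_pos)
    (inv_lt_one_of_one_lt₀ _root_.one_lt_two)
  rw [lt_div_iff₀ ha', mul_comm] at hk
  rw [div_le_iff₀ ha', mul_comm] at hk'
  refine ⟨k + 1, ?_, ?_⟩
  · rw [← ENNReal.coe_inv_two]; exact_mod_cast hk.le
  · rw [← ENNReal.coe_inv_two]
    have : a * 2⁻¹ ^ k = 2 * (a * 2⁻¹ ^ (k + 1)) := by
      rw [pow_succ', mul_left_comm, ← mul_assoc 2, mul_inv_cancel₀ (two_ne_zero (α := ℝ≥0)),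
        one_mul]
    exact_mod_cast hk'.trans this.le

section SubUniform

variable {α : Type*} [MeasurableSpace α] {μ : Measure α} {N : α → ℝ≥0∞}

lemma setLIntegral_preimage_Icc_rpow_neg_le (hN : ∀ u, μ (N ⁻¹' Iic u) ≤ u) {c : ℝ≥0∞}
    (hc0 : c ≠ 0) (hctop : c ≠ ⊤) {p : ℝ} (hp : 0 ≤ p) :
    ∫⁻ x in N ⁻¹' Icc c (2 * c), N x ^ (-p) ∂μ ≤ 2 * c ^ (1 - p) := by
  have hle : ∀ x ∈ N ⁻¹' Icc c (2 * c), N x ^ (-p) ≤ c ^ (-p) := fun x hx => by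
    simp only [ENNReal.rpow_neg]
    exact ENNReal.inv_le_inv.2 (ENNReal.rpow_le_rpow hx.1 hp)
  calc ∫⁻ x in N ⁻¹' Icc c (2 * c), N x ^ (-p) ∂μ
      ≤ ∫⁻ _ in N ⁻¹' Icc c (2 * c), c ^ (-p) ∂μ := setLIntegral_mono measurable_const hle
    _ = c ^ (-p) * μ (N ⁻¹' Icc c (2 * c)) := setLIntegral_const _ _
    _ ≤ c ^ (-p) * (2 * c) := by
        gcongr
        exact (measure_mono fun x hx => hx.2).trans (hN _)
    _ = 2 * c ^ (1 - p) := by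
        rw [sub_eq_neg_add, ENNReal.rpow_add _ _ hc0 hctop, ENNReal.rpow_one]; ring

lemma setLIntegral_iUnion_preimage_Icc_rpow_neg_le (hN : ∀ u, μ (N ⁻¹' Iic u) ≤ u)
    {a ρ : ℝ≥0∞} (ha0 : a ≠ 0) (hatop : a ≠ ⊤) (hρ0 : ρ ≠ 0) (hρtop : ρ ≠ ⊤) {p : ℝ}
    (hp : 0 ≤ p) :
    ∫⁻ x in ⋃ k : ℕ, N ⁻¹' Icc (a * ρ ^ k) (2 * (a * ρ ^ k)), N x ^ (-p) ∂μ
      ≤ 2 * a ^ (1 - p) * (1 - ρ ^ (1 - p))⁻¹ := by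
  calc ∫⁻ x in ⋃ k : ℕ, N ⁻¹' Icc (a * ρ ^ k) (2 * (a * ρ ^ k)), N x ^ (-p) ∂μ
      ≤ ∑' k : ℕ, ∫⁻ x in N ⁻¹' Icc (a * ρ ^ k) (2 * (a * ρ ^ k)), N x ^ (-p) ∂μ :=
        lintegral_iUnion_le _ _
    _ ≤ ∑' k : ℕ, 2 * (a * ρ ^ k) ^ (1 - p) := by
        gcongr with k
        exact setLIntegral_preimage_Icc_rpow_neg_le hN
          (mul_ne_zero ha0 (pow_ne_zero _ hρ0))
          (ENNReal.mul_ne_top hatop (ENNReal.pow_ne_top hρtop)) hp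
    _ = 2 * a ^ (1 - p) * (1 - ρ ^ (1 - p))⁻¹ := by
        have hpow (k : ℕ) : (a * ρ ^ k) ^ (1 - p) = a ^ (1 - p) * (ρ ^ (1 - p)) ^ k := by
          rw [ENNReal.mul_rpow_of_ne_zero ha0 (pow_ne_zero _ hρ0), ← ENNReal.rpow_natCast,
            ← ENNReal.rpow_mul, mul_comm (k : ℝ), ENNReal.rpow_mul_natCast]
        simp_rw [hpow]
        rw [ENNReal.tsum_mul_left, ENNReal.tsum_mul_left, ENNReal.tsum_geometric, mul_assoc]

lemma setLIntegral_preimage_Iic_rpow_neg_le (hN : ∀ u, μ (N ⁻¹' Iic u) ≤ u) {a : ℝ≥0∞}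
    (ha : a ≠ ⊤) {p : ℝ} (hp : 0 ≤ p) :
    ∫⁻ x in N ⁻¹' Iic a, N x ^ (-p) ∂μ ≤ 2 * a ^ (1 - p) * (1 - 2⁻¹ ^ (1 - p))⁻¹ := by
  have hnull : μ (N ⁻¹' Iic 0) = 0 := le_zero_iff.1 (hN 0)
  rcases eq_or_ne a 0 with rfl | ha0
  · simp [Measure.restrict_eq_zero.2 hnull]
  have hcover : N ⁻¹' Iic a ⊆
      N ⁻¹' Iic 0 ∪ ⋃ k : ℕ, N ⁻¹' Icc (a * 2⁻¹ ^ k) (2 * (a * 2⁻¹ ^ k)) := fun x hx => by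
    rcases eq_or_ne (N x) 0 with h | h
    · exact Or.inl h.le
    · exact Or.inr (mem_iUnion.2 (ENNReal.exists_mem_Icc_mul_inv_two_pow ha h hx))
  calc ∫⁻ x in N ⁻¹' Iic a, N x ^ (-p) ∂μ
      ≤ ∫⁻ x in N ⁻¹' Iic 0 ∪ ⋃ k : ℕ, N ⁻¹' Icc (a * 2⁻¹ ^ k) (2 * (a * 2⁻¹ ^ k)),
          N x ^ (-p) ∂μ := lintegral_mono_set hcover
    _ ≤ ∫⁻ x in N ⁻¹' Iic 0, N x ^ (-p) ∂μ
          + ∫⁻ x in ⋃ k : ℕ, N ⁻¹' Icc (a * 2⁻¹ ^ k) (2 * (a * 2⁻¹ ^ k)), N x ^ (-p) ∂μ :=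
        lintegral_union_le _ _ _
    _ ≤ 2 * a ^ (1 - p) * (1 - 2⁻¹ ^ (1 - p))⁻¹ := by
        rw [Measure.restrict_eq_zero.2 hnull, lintegral_zero_measure, zero_add]
        exact setLIntegral_iUnion_preimage_Icc_rpow_neg_le hN ha0 ha (by simp) (by simp) hp

lemma setLIntegral_preimage_Ici_rpow_neg_le (hN : ∀ u, μ (N ⁻¹' Iic u) ≤ u)
    (hN_top : ∀ x, N x ≠ ⊤) {b : ℝ≥0∞} (hb0 : b ≠ 0) (hb : b ≠ ⊤) {p : ℝ} (hp : 0 ≤ p) :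
    ∫⁻ x in N ⁻¹' Ici b, N x ^ (-p) ∂μ ≤ 2 * b ^ (1 - p) * (1 - 2 ^ (1 - p))⁻¹ := by
  have hcover : N ⁻¹' Ici b ⊆ ⋃ k : ℕ, N ⁻¹' Icc (b * 2 ^ k) (2 * (b * 2 ^ k)) := fun x hx =>
    mem_iUnion.2 (ENNReal.exists_mem_Icc_mul_two_pow hb0 (hN_top x) hx)
  exact (lintegral_mono_set hcover).trans
    (setLIntegral_iUnion_preimage_Icc_rpow_neg_le hN hb0 hb two_ne_zero ENNReal.ofNat_ne_top hp)

end SubUniform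

lemma measure_preimage_Iic_measure_Ioi_le (F : Measure ℝ) [NullSingletonClass F] (u : ℝ≥0∞) :
    F ((fun z => F (Ioi z)) ⁻¹' Iic u) ≤ u := by
  set T := (fun z => F (Ioi z)) ⁻¹' Iic u
  have hT : IsUpperSet T := fun a b hab ha => (measure_mono (Ioi_subset_Ioi hab)).trans ha
  -- apart from its infimum, the up-set `T` is the directed union of the `Ioi q`, `q ∈ T ∩ ℚ`
  have hcover : T ⊆ {sInf T} ∪ ⋃ q : {q : ℚ // (q : ℝ) ∈ T}, Ioi (q : ℝ) := by
    intro x hx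
    by_cases h : ∃ y ∈ T, y < x
    · obtain ⟨y, hy, hyx⟩ := h
      obtain ⟨q, hyq, hqx⟩ := exists_rat_btwn hyx
      exact Or.inr (mem_iUnion.2 ⟨⟨q, hT hyq.le hy⟩, hqx⟩)
    · push Not at h
      exact Or.inl (IsLeast.csInf_eq ⟨hx, h⟩).symm
  have hdir : Directed (· ⊆ ·) fun q : {q : ℚ // (q : ℝ) ∈ T} => Ioi (q : ℝ) :=
    Antitone.directed_le fun q r h => Ioi_subset_Ioi (by exact_mod_cast h)
  calc F T ≤ F ({sInf T} ∪ ⋃ q : {q : ℚ // (q : ℝ) ∈ T}, Ioi (q : ℝ)) := measure_mono hcover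
    _ ≤ F {sInf T} + F (⋃ q : {q : ℚ // (q : ℝ) ∈ T}, Ioi (q : ℝ)) := measure_union_le _ _
    _ ≤ u := by
        rw [measure_singleton, zero_add, hdir.measure_iUnion]
        exact iSup_le fun q => q.2

lemma measurable_measure_Ioi (F : Measure ℝ) : Measurable fun z => F (Ioi z) :=
  Antitone.measurable fun _ _ h => measure_mono (Ioi_subset_Ioi h)

lemma enorm_toReal_inv_mul_mul_le (A B : ℝ≥0∞) (x y : ℝ) :
    ‖A.toReal⁻¹ * x * y‖ₑ ≤ A ^ (-(3 / 2) : ℝ) * B ^ (1 / 2 : ℝ) * ‖x‖ₑ ^ 2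
      + B ^ (-(1 / 2) : ℝ) * A ^ (-(1 / 2) : ℝ) * ‖y‖ₑ ^ 2 := by
  by_cases hK : A.toReal⁻¹ * x * y = 0
  · simp [hK]
  simp only [mul_eq_zero, inv_eq_zero, ENNReal.toReal_eq_zero_iff, not_or] at hK
  obtain ⟨⟨⟨hA0, hAtop⟩, hx⟩, hy⟩ := hK
  rcases eq_or_ne B 0 with rfl | hB0
  · calc ‖A.toReal⁻¹ * x * y‖ₑ ≤ ⊤ := le_top
      _ = _ := by simp [ENNReal.zero_rpow_of_neg, hA0, hAtop, hy]
  rcases eq_or_ne B ⊤ with rfl | hBtop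
  · calc ‖A.toReal⁻¹ * x * y‖ₑ ≤ ⊤ := le_top
      _ = _ := by simp [hA0, hAtop, hx]
  have hA : ‖A.toReal⁻¹‖ₑ = A ^ (-(3 / 4) : ℝ) * A ^ (-(1 / 4) : ℝ) := by
    rw [← ENNReal.rpow_add _ _ hA0 hAtop, enorm_inv (ENNReal.toReal_ne_zero.2 ⟨hA0, hAtop⟩)]
    norm_num [Real.enorm_eq_ofReal ENNReal.toReal_nonneg, hAtop, ENNReal.rpow_neg_one]
  have hB : B ^ (1 / 4 : ℝ) * B ^ (-(1 / 4) : ℝ) = 1 := by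
    rw [← ENNReal.rpow_add _ _ hB0 hBtop]; norm_num
  have hsq (C D : ℝ≥0∞) (c d : ℝ) (z : ℝ≥0∞) :
      (C ^ c * D ^ d * z) ^ 2 = C ^ (c * 2) * D ^ (d * 2) * z ^ 2 := by
    rw [mul_pow, mul_pow, ← ENNReal.rpow_mul_natCast, ← ENNReal.rpow_mul_natCast]; norm_num
  calc ‖A.toReal⁻¹ * x * y‖ₑ
      = A ^ (-(3 / 4) : ℝ) * A ^ (-(1 / 4) : ℝ) * (B ^ (1 / 4 : ℝ) * B ^ (-(1 / 4) : ℝ))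
          * ‖x‖ₑ * ‖y‖ₑ := by rw [enorm_mul, enorm_mul, hA, hB, mul_one]
    _ = (A ^ (-(3 / 4) : ℝ) * B ^ (1 / 4 : ℝ) * ‖x‖ₑ)
          * (B ^ (-(1 / 4) : ℝ) * A ^ (-(1 / 4) : ℝ) * ‖y‖ₑ) := by ring
    _ ≤ _ := by convert ENNReal.mul_le_sq_add_sq _ _ using 2 <;> rw [hsq] <;> norm_num

lemma measurableSet_lt_fst_snd : MeasurableSet {q : ℝ × ℝ | q.1 < q.2} :=
  measurableSet_lt measurable_fst measurable_snd

noncomputable def tailKernel (F : Measure ℝ) (f g : ℝ → ℝ) (p : ℝ × ℝ) : ℝ :=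
  {q : ℝ × ℝ | q.1 < q.2}.indicator (fun q => (F (Ioi q.1)).toReal⁻¹ * f q.2 * g q.1) p

lemma integral_tailKernel_left (F : Measure ℝ) (f g : ℝ → ℝ) (z : ℝ) :
    ∫ s, tailKernel F f g (z, s) ∂F = (F (Ioi z)).toReal⁻¹ * (∫ s in Ioi z, f s ∂F) * g z := by
  have hsec : (fun s => tailKernel F f g (z, s))
      = (Ioi z).indicator fun s => (F (Ioi z)).toReal⁻¹ * g z * f s := by
    ext s; simp only [tailKernel, indicator_apply, mem_ofPred_eq, mem_Ioi]; split_ifs <;> ring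
  rw [hsec, integral_indicator measurableSet_Ioi, integral_const_mul]; ring

lemma integral_tailKernel_right (F : Measure ℝ) (f g : ℝ → ℝ) (s : ℝ) :
    ∫ z, tailKernel F f g (z, s) ∂F = f s * ∫ z in Iio s, g z * (F (Ioi z)).toReal⁻¹ ∂F := by
  have hsec : (fun z => tailKernel F f g (z, s))
      = (Iio s).indicator fun z => f s * (g z * (F (Ioi z)).toReal⁻¹) := by
    ext z; simp only [tailKernel, indicator_apply, mem_ofPred_eq, mem_Iio]; split_ifs <;> ring
  rw [hsec, integral_indicator measurableSet_Iio, integral_const_mul]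

section Survival

variable (F : Measure ℝ) [IsFiniteMeasure F] [NullSingletonClass F]

-- `κ = 2 ∑ₖ 2^(-k/2)`, the sum of the dyadic-shell bounds
local notation "κ" => (2 : ℝ≥0∞) * (1 - 2 ^ (-(1 / 2) : ℝ))⁻¹

lemma setLIntegral_Ioi_measure_Ioi_rpow_le (z : ℝ) :
    ∫⁻ s in Ioi z, F (Ioi s) ^ (-(1 / 2) : ℝ) ∂F
      ≤ κ * F (Ioi z) ^ (1 / 2 : ℝ) := by
  have hsub : Ioi z ⊆ (fun s => F (Ioi s)) ⁻¹' Iic (F (Ioi z)) := fun s hs =>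
    measure_mono (Ioi_subset_Ioi (le_of_lt hs))
  refine (lintegral_mono_set hsub).trans ?_
  refine (setLIntegral_preimage_Iic_rpow_neg_le (measure_preimage_Iic_measure_Ioi_le F)
    (measure_ne_top F _) (by norm_num)).trans_eq ?_
  rw [ENNReal.inv_rpow, ← ENNReal.rpow_neg]
  norm_num
  ring

lemma setLIntegral_Iio_measure_Ioi_rpow_le (s : ℝ) (hs : F (Ioi s) ≠ 0) :
    ∫⁻ z in Iio s, F (Ioi z) ^ (-(3 / 2) : ℝ) ∂F
      ≤ κ * F (Ioi s) ^ (-(1 / 2) : ℝ) := by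
  have hsub : Iio s ⊆ (fun z => F (Ioi z)) ⁻¹' Ici (F (Ioi s)) := fun z hz =>
    measure_mono (Ioi_subset_Ioi (le_of_lt hz))
  refine (lintegral_mono_set hsub).trans ?_
  refine (setLIntegral_preimage_Ici_rpow_neg_le (measure_preimage_Iic_measure_Ioi_le F)
    (fun _ => measure_ne_top F _) hs (measure_ne_top F _) (by norm_num)).trans_eq ?_
  norm_num
  ring

lemma setLIntegral_lt_rpow_mul_snd_le {h : ℝ → ℝ≥0∞} (hh : AEMeasurable h F) :
    ∫⁻ q in {q : ℝ × ℝ | q.1 < q.2},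
        F (Ioi q.1) ^ (-(3 / 2) : ℝ) * F (Ioi q.2) ^ (1 / 2 : ℝ) * h q.2 ∂F.prod F
      ≤ κ * ∫⁻ s, h s ∂F := by
  have hN := measurable_measure_Ioi F
  have hmeas : AEMeasurable (fun q : ℝ × ℝ =>
      F (Ioi q.1) ^ (-(3 / 2) : ℝ) * F (Ioi q.2) ^ (1 / 2 : ℝ) * h q.2) (F.prod F) :=
    (((hN.comp measurable_fst).pow_const _).mul
      ((hN.comp measurable_snd).pow_const _)).aemeasurable.mul hh.comp_snd
  rw [← lintegral_indicator measurableSet_lt_fst_snd,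
    lintegral_prod_symm _ (hmeas.indicator measurableSet_lt_fst_snd), ← lintegral_const_mul'' _ hh]
  refine lintegral_mono fun s => ?_
  have hsec : (fun z => {q : ℝ × ℝ | q.1 < q.2}.indicator
      (fun q => F (Ioi q.1) ^ (-(3 / 2) : ℝ) * F (Ioi q.2) ^ (1 / 2 : ℝ) * h q.2) (z, s))
      = (Iio s).indicator fun z =>
          F (Ioi z) ^ (-(3 / 2) : ℝ) * (F (Ioi s) ^ (1 / 2 : ℝ) * h s) := by
    ext z; simp [indicator_apply, mul_assoc]
  rw [hsec, lintegral_indicator measurableSet_Iio, lintegral_mul_const _ (hN.pow_const _)]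
  rcases eq_or_ne (F (Ioi s)) 0 with h0 | h0
  · simp [h0]
  calc (∫⁻ z in Iio s, F (Ioi z) ^ (-(3 / 2) : ℝ) ∂F) * (F (Ioi s) ^ (1 / 2 : ℝ) * h s)
      ≤ κ * F (Ioi s) ^ (-(1 / 2) : ℝ)
          * (F (Ioi s) ^ (1 / 2 : ℝ) * h s) := by
        gcongr; exact setLIntegral_Iio_measure_Ioi_rpow_le F s h0
    _ = κ * h s := by
        rw [mul_assoc, ← mul_assoc (F (Ioi s) ^ _), ← ENNReal.rpow_add _ _ h0 (measure_ne_top F _)]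
        norm_num

lemma setLIntegral_lt_rpow_mul_fst_le {h : ℝ → ℝ≥0∞} (hh : AEMeasurable h F) :
    ∫⁻ q in {q : ℝ × ℝ | q.1 < q.2},
        F (Ioi q.2) ^ (-(1 / 2) : ℝ) * F (Ioi q.1) ^ (-(1 / 2) : ℝ) * h q.1 ∂F.prod F
      ≤ κ * ∫⁻ z, h z ∂F := by
  have hN := measurable_measure_Ioi F
  have hmeas : AEMeasurable (fun q : ℝ × ℝ =>
      F (Ioi q.2) ^ (-(1 / 2) : ℝ) * F (Ioi q.1) ^ (-(1 / 2) : ℝ) * h q.1) (F.prod F) :=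
    (((hN.comp measurable_snd).pow_const _).mul
      ((hN.comp measurable_fst).pow_const _)).aemeasurable.mul hh.comp_fst
  rw [← lintegral_indicator measurableSet_lt_fst_snd,
    lintegral_prod _ (hmeas.indicator measurableSet_lt_fst_snd), ← lintegral_const_mul'' _ hh]
  refine lintegral_mono fun z => ?_
  have hsec : (fun s => {q : ℝ × ℝ | q.1 < q.2}.indicator
      (fun q => F (Ioi q.2) ^ (-(1 / 2) : ℝ) * F (Ioi q.1) ^ (-(1 / 2) : ℝ) * h q.1) (z, s))
      = (Ioi z).indicator fun s =>
          F (Ioi s) ^ (-(1 / 2) : ℝ) * (F (Ioi z) ^ (-(1 / 2) : ℝ) * h z) := by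
    ext s; simp [indicator_apply, mul_assoc]
  rw [hsec, lintegral_indicator measurableSet_Ioi, lintegral_mul_const _ (hN.pow_const _)]
  rcases eq_or_ne (F (Ioi z)) 0 with h0 | h0
  · simp [Measure.restrict_eq_zero.2 h0]
  calc (∫⁻ s in Ioi z, F (Ioi s) ^ (-(1 / 2) : ℝ) ∂F) * (F (Ioi z) ^ (-(1 / 2) : ℝ) * h z)
      ≤ κ * F (Ioi z) ^ (1 / 2 : ℝ)
          * (F (Ioi z) ^ (-(1 / 2) : ℝ) * h z) := by
        gcongr; exact setLIntegral_Ioi_measure_Ioi_rpow_le F z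
    _ = κ * h z := by
        rw [mul_assoc, ← mul_assoc (F (Ioi z) ^ _), ← ENNReal.rpow_add _ _ h0 (measure_ne_top F _)]
        norm_num

lemma integrable_tailKernel {f g : ℝ → ℝ} (hf : MemLp f 2 F) (hg : MemLp g 2 F) :
    Integrable (tailKernel F f g) (F.prod F) := by
  have hN := measurable_measure_Ioi F
  refine ⟨(((hN.ennreal_toReal.inv.comp measurable_fst).aestronglyMeasurable.mul
    hf.1.comp_snd).mul hg.1.comp_fst).indicator measurableSet_lt_fst_snd, ?_⟩
  have hC : κ ≠ ⊤ := by
    refine ENNReal.mul_ne_top ENNReal.ofNat_ne_top (ENNReal.inv_ne_top.2 (tsub_pos_iff_lt.2 ?_).ne')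
    exact ENNReal.rpow_lt_one_of_one_lt_of_neg ENNReal.one_lt_two (by norm_num)
  have hsq {h : ℝ → ℝ} (hh : MemLp h 2 F) : ∫⁻ s, ‖h s‖ₑ ^ 2 ∂F < ⊤ := by
    have h := lintegral_rpow_enorm_lt_top_of_eLpNorm_lt_top two_ne_zero ENNReal.ofNat_ne_top hh.2
    simpa only [ENNReal.toReal_ofNat, ENNReal.rpow_two] using h
  calc ∫⁻ q, ‖tailKernel F f g q‖ₑ ∂F.prod F
      = ∫⁻ q in {q : ℝ × ℝ | q.1 < q.2}, ‖(F (Ioi q.1)).toReal⁻¹ * f q.2 * g q.1‖ₑ ∂F.prod F := by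
        simp only [tailKernel, enorm_indicator_eq_indicator_enorm]
        exact lintegral_indicator measurableSet_lt_fst_snd _
    _ ≤ ∫⁻ q in {q : ℝ × ℝ | q.1 < q.2},
          (F (Ioi q.1) ^ (-(3 / 2) : ℝ) * F (Ioi q.2) ^ (1 / 2 : ℝ) * ‖f q.2‖ₑ ^ 2
            + F (Ioi q.2) ^ (-(1 / 2) : ℝ) * F (Ioi q.1) ^ (-(1 / 2) : ℝ) * ‖g q.1‖ₑ ^ 2)
          ∂F.prod F := lintegral_mono fun q => enorm_toReal_inv_mul_mul_le _ _ _ _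
    _ ≤ (∫⁻ q in {q : ℝ × ℝ | q.1 < q.2},
          F (Ioi q.1) ^ (-(3 / 2) : ℝ) * F (Ioi q.2) ^ (1 / 2 : ℝ) * ‖f q.2‖ₑ ^ 2 ∂F.prod F)
        + ∫⁻ q in {q : ℝ × ℝ | q.1 < q.2},
          F (Ioi q.2) ^ (-(1 / 2) : ℝ) * F (Ioi q.1) ^ (-(1 / 2) : ℝ) * ‖g q.1‖ₑ ^ 2 ∂F.prod F :=
        (lintegral_add_left' (by exact ((((hN.comp measurable_fst).pow_const _).mul
          ((hN.comp measurable_snd).pow_const _)).aemeasurable.mul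
          (hf.1.enorm.pow_const 2).comp_snd).restrict) _).le
    _ ≤ κ * ∫⁻ s, ‖f s‖ₑ ^ 2 ∂F
        + κ * ∫⁻ z, ‖g z‖ₑ ^ 2 ∂F :=
        add_le_add (setLIntegral_lt_rpow_mul_snd_le F (hf.1.enorm.pow_const 2))
          (setLIntegral_lt_rpow_mul_fst_le F (hg.1.enorm.pow_const 2))
    _ < ⊤ := ENNReal.add_lt_top.2
        ⟨ENNReal.mul_lt_top hC.lt_top (hsq hf), ENNReal.mul_lt_top hC.lt_top (hsq hg)⟩

end Survival

lemma Ioc_zero_ae_eq_Iio {F : Measure ℝ} [IsProbabilityMeasure F] [NullSingletonClass F]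
    (hF : F (Ioi 0) = 1) (s : ℝ) : Ioc 0 s =ᵐ[F] Iio s := by
  have hpos : Ioi (0 : ℝ) =ᵐ[F] univ :=
    ae_eq_univ.2 ((prob_compl_eq_zero_iff measurableSet_Ioi).2 hF)
  have h := hpos.inter (ae_eq_refl (Iio s))
  rw [Ioi_inter_Iio, univ_inter] at h
  exact Ioo_ae_eq_Ioc.symm.trans h

/-- The advanced operator `A` and the backward operator `B` are adjoint on `L²(F)`:
`∫ (Af) g dF = ∫ f (Bg) dF`, where `(Af)(z) = f(z) - S(z)⁻¹ ∫_{(z,∞)} f dF` and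
`(Bg)(z) = g(z) - ∫_{(0,z]} g(s) S(s)⁻¹ dF(s)`, with `S(t) = F((t,∞))`. -/
theorem advanced_backward_adjoint (F : Measure ℝ) [IsProbabilityMeasure F]
    [NullSingletonClass F] (hF : F (Set.Ioi (0 : ℝ)) = 1)
    (f g : ℝ → ℝ) (hf : MemLp f 2 F) (hg : MemLp g 2 F) :
    ∫ z, (f z - ((F (Set.Ioi z)).toReal)⁻¹ * ∫ s in Set.Ioi z, f s ∂F) * g z ∂F
      = ∫ z, f z * (g z - ∫ s in Set.Ioc 0 z, g s * ((F (Set.Ioi s)).toReal)⁻¹ ∂F) ∂F := by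
  have hK := integrable_tailKernel F hf hg
  have hfg : Integrable (fun z => f z * g z) F := hf.integrable_mul hg
  calc ∫ z, (f z - (F (Ioi z)).toReal⁻¹ * ∫ s in Ioi z, f s ∂F) * g z ∂F
      = ∫ z, (f z * g z - ∫ s, tailKernel F f g (z, s) ∂F) ∂F := by
        congr with z; rw [integral_tailKernel_left]; ring
    _ = ∫ z, f z * g z ∂F - ∫ z, ∫ s, tailKernel F f g (z, s) ∂F ∂F :=
        integral_sub hfg hK.integral_prod_left
    _ = ∫ s, f s * g s ∂F - ∫ s, ∫ z, tailKernel F f g (z, s) ∂F ∂F := by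
        rw [integral_integral_swap (f := fun z s => tailKernel F f g (z, s)) hK]
    _ = ∫ s, (f s * g s - ∫ z, tailKernel F f g (z, s) ∂F) ∂F :=
        (integral_sub hfg hK.integral_prod_right).symm
    _ = ∫ z, f z * (g z - ∫ s in Ioc 0 z, g s * (F (Ioi s)).toReal⁻¹ ∂F) ∂F := by
        congr with s
        rw [integral_tailKernel_right, setIntegral_congr_set (Ioc_zero_ae_eq_Iio hF s)]; ring
end

section
/- The advanced operator inverts the backward operator: for every f : ℝ → ℝ with f ∈ L²(F), one has (A(Bf))(z) = f(z) for F-almost every z. -/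
/-!
Write `S(t) = F((t,∞))` and `G(s) = ∫_{(0,s]} f/S dF`, so that `Bf = f - G`. Fubini on the region
`{0 < u ≤ s, z < s}` gives
`∫_{(z,∞)} G dF = ∫_{(0,∞)} F([u,∞) ∩ (z,∞)) f(u)/S(u) dF(u) = S(z) G(z) + ∫_{(z,∞)} f dF`,
since the weight is `S(z)` for `u ≤ z` and `F([u,∞)) = S(u)` for `u > z` (no atoms). Hence
`A(Bf)(z) = f(z) - G(z) + S(z)⁻¹ (S(z) G(z)) = f(z)` wherever `0 < z` and `S(z) > 0`, which holds
almost everywhere. The weight is at most `S(u)`, so Fubini applies as soon as `f` is integrable.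
-/

open MeasureTheory Set

theorem measure_eq_zero_of_forall_measure_Ioi_eq_zero {α : Type*} [MeasurableSpace α]
    [TopologicalSpace α] [LinearOrder α] [ClosedIicTopology α] [SecondCountableTopology α]
    {μ : Measure α} [NullSingletonClass μ] {N : Set α} (hN : ∀ z ∈ N, μ (Ioi z) = 0) :
    μ N = 0 := by
  -- each point of `N` other than its least element lies in `Ioi w` for some `w ∈ N`
  obtain ⟨T, hTN, hT, hTU⟩ :=
    TopologicalSpace.isOpen_biUnion_countable N Ioi fun _ _ => isOpen_Ioi
  have hU : μ (⋃ z ∈ N, Ioi z) = 0 := by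
    rw [← hTU]
    exact (measure_biUnion_null_iff hT).2 fun z hz => hN z (hTN hz)
  have hleast : (N \ ⋃ z ∈ N, Ioi z).Subsingleton := by
    intro x hx y hy
    simp only [mem_sdiff, mem_iUnion, mem_Ioi, not_exists, not_lt] at hx hy
    exact le_antisymm (hx.2 y hy.1) (hy.2 x hx.1)
  rw [← measure_sdiff_null hU]
  exact hleast.measure_zero μ

theorem ae_measure_Ioi_pos {α : Type*} [MeasurableSpace α]
    [TopologicalSpace α] [LinearOrder α] [ClosedIicTopology α] [SecondCountableTopology α]
    {μ : Measure α} [NullSingletonClass μ] : ∀ᵐ z ∂μ, 0 < μ (Ioi z) := by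
  simp only [pos_iff_ne_zero]
  exact measure_eq_zero_of_forall_measure_Ioi_eq_zero fun z hz => not_not.1 hz

section Fubini

variable {μ : Measure ℝ} {g : ℝ → ℝ} {a z : ℝ}

theorem indicator_Ioc_apply_eq_indicator_Ici (g : ℝ → ℝ) (a s u : ℝ) :
    (Ioc a s).indicator g u = (Ici u).indicator (fun _ => (Ioi a).indicator g u) s := by
  by_cases hau : a < u <;> by_cases hus : u ≤ s <;> simp [hau, hus]

theorem setIntegral_Ioi_indicator_Ioc (g : ℝ → ℝ) (u : ℝ) :
    ∫ s in Ioi z, (Ioc a s).indicator g u ∂μ =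
      (Ioi a).indicator (fun u => μ.real (Ici u ∩ Ioi z) * g u) u := by
  simp only [indicator_Ioc_apply_eq_indicator_Ici g a _ u]
  rw [integral_indicator_const _ measurableSet_Ici, measureReal_restrict_apply measurableSet_Ici,
    smul_eq_mul, indicator_mul_right]

theorem integrable_indicator_Ioc_prod [IsFiniteMeasure μ] (hg : AEStronglyMeasurable g μ)
    (hint : IntegrableOn (fun u => μ.real (Ici u ∩ Ioi z) * g u) (Ioi a) μ) :
    Integrable (Function.uncurry fun s u => (Ioc a s).indicator g u)
      ((μ.restrict (Ioi z)).prod μ) := by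
  have hmeas : AEStronglyMeasurable (Function.uncurry fun s u => (Ioc a s).indicator g u)
      ((μ.restrict (Ioi z)).prod μ) :=
    hg.comp_snd.indicator ((measurableSet_lt measurable_const measurable_snd).inter
      (measurableSet_le measurable_snd measurable_fst))
  refine (integrable_prod_iff' hmeas).2 ⟨ae_of_all _ fun u => ?_, ?_⟩
  · simp only [Function.uncurry_apply_pair, indicator_Ioc_apply_eq_indicator_Ici g a _ u]
    exact (integrable_const _).indicator measurableSet_Ici
  · simp only [Function.uncurry_apply_pair, norm_indicator_eq_indicator_norm,
      setIntegral_Ioi_indicator_Ioc]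
    refine (integrable_indicator_iff measurableSet_Ioi).2 (hint.norm.congr ?_)
    refine ae_of_all _ fun u => ?_
    simp only [norm_mul, Real.norm_of_nonneg measureReal_nonneg]

theorem integrableOn_integral_Ioc [IsFiniteMeasure μ] (hg : AEStronglyMeasurable g μ)
    (hint : IntegrableOn (fun u => μ.real (Ici u ∩ Ioi z) * g u) (Ioi a) μ) :
    IntegrableOn (fun s => ∫ u in Ioc a s, g u ∂μ) (Ioi z) μ :=
  (integrable_indicator_Ioc_prod hg hint).integral_prod_left.congr
    (ae_of_all _ fun _ => integral_indicator measurableSet_Ioc)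

theorem setIntegral_Ioi_integral_Ioc [IsFiniteMeasure μ] (hg : AEStronglyMeasurable g μ)
    (hint : IntegrableOn (fun u => μ.real (Ici u ∩ Ioi z) * g u) (Ioi a) μ) :
    ∫ s in Ioi z, ∫ u in Ioc a s, g u ∂μ ∂μ = ∫ u in Ioi a, μ.real (Ici u ∩ Ioi z) * g u ∂μ := by
  simp only [← integral_indicator measurableSet_Ioc]
  rw [integral_integral_swap (integrable_indicator_Ioc_prod hg hint)]
  simp only [setIntegral_Ioi_indicator_Ioc]
  exact integral_indicator measurableSet_Ioi

end Fubini

section SurvivalWeight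

variable {μ : Measure ℝ} [IsFiniteMeasure μ] {f : ℝ → ℝ} {a z : ℝ}

theorem MeasureTheory.AEStronglyMeasurable.mul_inv_measureReal_Ioi
    (hf : AEStronglyMeasurable f μ) :
    AEStronglyMeasurable (fun u => f u * (μ.real (Ioi u))⁻¹) μ :=
  hf.mul (Antitone.measurable fun _ _ h =>
    measureReal_mono (Ioi_subset_Ioi h)).inv.aestronglyMeasurable

variable [NullSingletonClass μ]

theorem norm_measureReal_Ici_inter_mul_inv_le (f : ℝ → ℝ) (u z : ℝ) :
    ‖μ.real (Ici u ∩ Ioi z) * (f u * (μ.real (Ioi u))⁻¹)‖ ≤ ‖f u‖ := by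
  have hle : μ.real (Ici u ∩ Ioi z) ≤ μ.real (Ioi u) := by
    rw [measureReal_congr Ioi_ae_eq_Ici]
    exact measureReal_mono inter_subset_left
  calc ‖μ.real (Ici u ∩ Ioi z) * (f u * (μ.real (Ioi u))⁻¹)‖
      = μ.real (Ici u ∩ Ioi z) / μ.real (Ioi u) * ‖f u‖ := by
        rw [norm_mul, norm_mul, norm_inv, Real.norm_of_nonneg measureReal_nonneg,
          Real.norm_of_nonneg measureReal_nonneg]
        ring
    _ ≤ ‖f u‖ := mul_le_of_le_one_left (norm_nonneg _) (div_le_one_of_le₀ hle measureReal_nonneg)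

theorem integrableOn_measureReal_Ici_inter_mul_inv (hf : Integrable f μ) :
    IntegrableOn (fun u => μ.real (Ici u ∩ Ioi z) * (f u * (μ.real (Ioi u))⁻¹)) (Ioi a) μ := by
  have hweight : Antitone fun u => μ.real (Ici u ∩ Ioi z) := fun _ _ h =>
    measureReal_mono (inter_subset_inter_left _ (Ici_subset_Ici.2 h))
  refine Integrable.mono' hf.norm.integrableOn ?_
    (ae_of_all _ fun u => norm_measureReal_Ici_inter_mul_inv_le f u z)
  exact (hweight.measurable.aestronglyMeasurable.mul
    hf.aestronglyMeasurable.mul_inv_measureReal_Ioi).restrict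

theorem setIntegral_Ioi_integral_Ioc_mul_inv (hf : Integrable f μ) (haz : a ≤ z) :
    ∫ s in Ioi z, ∫ u in Ioc a s, f u * (μ.real (Ioi u))⁻¹ ∂μ ∂μ =
      μ.real (Ioi z) * ∫ u in Ioc a z, f u * (μ.real (Ioi u))⁻¹ ∂μ + ∫ s in Ioi z, f s ∂μ := by
  have hint := integrableOn_measureReal_Ici_inter_mul_inv (a := a) (z := z) hf
  rw [setIntegral_Ioi_integral_Ioc hf.aestronglyMeasurable.mul_inv_measureReal_Ioi hint,
    ← Ioc_union_Ioi_eq_Ioi haz, setIntegral_union (Ioc_disjoint_Ioi le_rfl) measurableSet_Ioi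
      (hint.mono_set Ioc_subset_Ioi_self) (hint.mono_set (Ioi_subset_Ioi haz)),
    ← integral_const_mul]
  congr 1
  · refine setIntegral_congr_fun measurableSet_Ioc fun u hu => ?_
    rw [inter_eq_right.2 (Ioi_subset_Ici hu.2)]
  · refine setIntegral_congr_ae measurableSet_Ioi ?_
    filter_upwards [ae_measure_Ioi_pos] with u hSu hu
    have hSu' : μ.real (Ioi u) ≠ 0 := ENNReal.toReal_ne_zero.2 ⟨hSu.ne', measure_ne_top μ _⟩
    rw [inter_eq_left.2 (Ici_subset_Ioi.2 hu), ← measureReal_congr Ioi_ae_eq_Ici,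
      mul_comm (f u), ← mul_assoc, mul_inv_cancel₀ hSu', one_mul]

end SurvivalWeight

/-- The advanced operator inverts the backward operator: `A(Bf) = f` `F`-almost
everywhere, where `(Af)(z) = f(z) - S(z)⁻¹ ∫_{(z,∞)} f dF` and
`(Bf)(z) = f(z) - ∫_{(0,z]} f(s) S(s)⁻¹ dF(s)`, with `S(t) = F((t,∞))`. -/
theorem advanced_backward_inverse (F : Measure ℝ) [IsProbabilityMeasure F]
    [NullSingletonClass F] (hF : F (Set.Ioi (0 : ℝ)) = 1)
    (f : ℝ → ℝ) (hf : MemLp f 2 F) :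
    ∀ᵐ z ∂F,
      (f z - ∫ s in Set.Ioc 0 z, f s * ((F (Set.Ioi s)).toReal)⁻¹ ∂F)
        - ((F (Set.Ioi z)).toReal)⁻¹ *
            ∫ s in Set.Ioi z,
              (f s - ∫ u in Set.Ioc 0 s, f u * ((F (Set.Ioi u)).toReal)⁻¹ ∂F) ∂F
      = f z := by
  have hfi : Integrable f F := hf.integrable one_le_two
  have hpos : ∀ᵐ z ∂F, 0 < z :=
    (ae_iff_measure_eq measurableSet_Ioi.nullMeasurableSet).2 (by rw [measure_univ]; exact hF)
  filter_upwards [ae_measure_Ioi_pos, hpos] with z hSz hz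
  have hS : F.real (Ioi z) ≠ 0 := ENNReal.toReal_ne_zero.2 ⟨hSz.ne', measure_ne_top F _⟩
  simp only [← measureReal_def]
  rw [integral_sub hfi.integrableOn
      (integrableOn_integral_Ioc hfi.aestronglyMeasurable.mul_inv_measureReal_Ioi
        (integrableOn_measureReal_Ici_inter_mul_inv hfi)),
    setIntegral_Ioi_integral_Ioc_mul_inv hfi hz.le]
  field_simp
  ring
end

section
/- For every f : ℝ → ℝ with f ∈ L²(F), one has (B(Af))(z) = f(z) − ∫ f dF for F-almost every z; in particular, if ∫ f dF = 0 then (B(Af))(z) = f(z) for F-almost every z. -/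
/-!
Write `G(s) = ∫_{(s,∞)} f dF`. Since `A f = f - G / S`, the claim is the product rule
`∫_{(0,z]} (f / S - G / S²) dF = G(0) / S(0) - G(z) / S(z)` for `G · S⁻¹`, where `dG = -f dF`
and, `F` being atomless, `d(S⁻¹) = S⁻² dF`. Fubini turns `∫_{(0,z]} G S⁻² dF` into
`∫ f(u) (S(min z u)⁻¹ - 1) dF(u)` by means of `∫_{(0,t]} S⁻² dF = S(t)⁻¹ - 1`, and the latter
holds because `S` pushes the atomless law `F` forward to the uniform distribution on `[0, 1]`.
-/

open MeasureTheory Set Filter Topology ProbabilityTheory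

noncomputable section

def survival (F : Measure ℝ) (t : ℝ) : ℝ := F.real (Ioi t)

def advancedOp (F : Measure ℝ) (f : ℝ → ℝ) (z : ℝ) : ℝ :=
  f z - (survival F z)⁻¹ * ∫ u in Ioi z, f u ∂F

def backwardOp (F : Measure ℝ) (f : ℝ → ℝ) (z : ℝ) : ℝ :=
  f z - ∫ s in Ioc 0 z, f s * (survival F s)⁻¹ ∂F

lemma survival_nonneg (F : Measure ℝ) (t : ℝ) : 0 ≤ survival F t := measureReal_nonneg

lemma ProbabilityTheory.continuous_cdf (μ : Measure ℝ) [IsProbabilityMeasure μ]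
    [NullSingletonClass μ] : Continuous (cdf μ) := by
  refine continuous_iff_continuousAt.2 fun a => ?_
  have hleft : Function.leftLim (cdf μ) a = cdf μ a := by
    have h := (cdf μ).measure_singleton a
    rw [measure_cdf, measure_singleton, eq_comm, ENNReal.ofReal_eq_zero] at h
    linarith [(monotone_cdf μ).leftLim_le (le_refl a)]
  rw [(monotone_cdf μ).continuousAt_iff_leftLim_eq_rightLim, hleft, StieltjesFunction.rightLim_eq]

lemma integral_indicator_Iic_inter_Iio_mul {μ : Measure ℝ} (g f : ℝ → ℝ) (s z : ℝ) :
    ∫ u, (Iic z ∩ Iio u).indicator g s * f u ∂μ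
      = (Iic z).indicator (fun s => g s * ∫ u in Ioi s, f u ∂μ) s := by
  by_cases hs : s ∈ Iic z
  · rw [indicator_of_mem hs, ← integral_indicator measurableSet_Ioi, ← integral_const_mul]
    congr 1 with u
    by_cases hu : s < u <;> simp [hs, hu]
  · simp [indicator_of_notMem hs, indicator_of_notMem (fun h : s ∈ Iic z ∩ Iio _ => hs h.1)]

section Survival

variable {F : Measure ℝ} [IsProbabilityMeasure F] {f : ℝ → ℝ}

lemma survival_eq_one_sub_cdf : survival F = fun t => 1 - cdf F t := by
  ext t
  rw [survival, cdf_eq_real, ← compl_Iic, probReal_compl_eq_one_sub measurableSet_Iic]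

lemma antitone_survival : Antitone (survival F) := by
  intro a b hab
  simp only [survival_eq_one_sub_cdf]
  linarith [monotone_cdf F hab]

lemma measurable_survival : Measurable (survival F) := antitone_survival.measurable

lemma survival_le_one (t : ℝ) : survival F t ≤ 1 := measureReal_le_one

lemma ofReal_survival (t : ℝ) : ENNReal.ofReal (survival F t) = F (Ioi t) :=
  ofReal_measureReal

lemma tendsto_survival_atBot : Tendsto (survival F) atBot (𝓝 1) := by
  rw [survival_eq_one_sub_cdf]
  simpa using (tendsto_cdf_atBot F).const_sub 1

lemma tendsto_survival_atTop : Tendsto (survival F) atTop (𝓝 0) := by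
  rw [survival_eq_one_sub_cdf]
  simpa using (tendsto_cdf_atTop F).const_sub 1

lemma inv_survival_le_of_le {s z : ℝ} (hz : 0 < survival F z) (hs : s ≤ z) :
    (survival F s)⁻¹ ≤ (survival F z)⁻¹ :=
  inv_anti₀ hz (antitone_survival hs)

lemma norm_inv_survival_le_of_le {s z : ℝ} (hz : 0 < survival F z) (hs : s ≤ z) :
    ‖(survival F s)⁻¹‖ ≤ (survival F z)⁻¹ := by
  rw [Real.norm_eq_abs, abs_of_nonneg (inv_nonneg.2 (survival_nonneg F s))]
  exact inv_survival_le_of_le hz hs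

lemma Ioc_ae_eq_Iic_of_measure_Ioi (hF : F (Ioi 0) = 1) (z : ℝ) : Ioc 0 z =ᵐ[F] Iic z := by
  have hpos : Ioi (0 : ℝ) =ᵐ[F] univ :=
    ae_eq_univ.2 ((prob_compl_eq_zero_iff measurableSet_Ioi).2 hF)
  simpa only [Ioi_inter_Iic, univ_inter] using hpos.inter (EventuallyEq.refl _ (Iic z))

lemma integrable_indicator_inv_survival_sq_mul (hf : Integrable f F) {z : ℝ}
    (hz : 0 < survival F z) :
    Integrable (fun p : ℝ × ℝ =>
      (Iic z ∩ Iio p.2).indicator (fun s => (survival F s)⁻¹ ^ 2) p.1 * f p.2) (F.prod F) := by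
  have hmeas : Measurable fun p : ℝ × ℝ =>
      (Iic z ∩ Iio p.2).indicator (fun s => (survival F s)⁻¹ ^ 2) p.1 :=
    ((measurable_survival.inv.pow_const 2).comp measurable_fst).indicator
      ((measurableSet_le measurable_fst measurable_const).inter
        (measurableSet_lt measurable_fst measurable_snd))
  refine (hf.comp_snd F).bdd_mul hmeas.aestronglyMeasurable (c := (survival F z)⁻¹ ^ 2)
    (Eventually.of_forall fun p => ?_)
  rw [Real.norm_eq_abs, abs_of_nonneg (indicator_nonneg (fun _ _ => sq_nonneg _) _)]
  refine indicator_le' (fun s hs => ?_) (fun _ _ => sq_nonneg _) _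
  exact pow_le_pow_left₀ (inv_nonneg.2 (survival_nonneg F s)) (inv_survival_le_of_le hz hs.1) 2

lemma integrableOn_inv_survival_sq_mul_tail (hf : Integrable f F) {z : ℝ}
    (hz : 0 < survival F z) :
    IntegrableOn (fun s => (survival F s)⁻¹ ^ 2 * ∫ u in Ioi s, f u ∂F) (Iic z) F := by
  rw [← integrable_indicator_iff measurableSet_Iic]
  simpa only [integral_indicator_Iic_inter_Iio_mul]
    using (integrable_indicator_inv_survival_sq_mul hf hz).integral_prod_left

lemma integral_mul_inv_survival_min_sub_one (hf : Integrable f F) {z : ℝ}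
    (hz : 0 < survival F z) :
    ∫ u, f u * ((survival F (min z u))⁻¹ - 1) ∂F
      = ∫ u in Iic z, f u * (survival F u)⁻¹ ∂F + (survival F z)⁻¹ * ∫ u in Ioi z, f u ∂F
        - ∫ u, f u ∂F := by
  have hint : Integrable (fun u => f u * (survival F (min z u))⁻¹) F :=
    hf.mul_bdd
      (measurable_survival.comp (measurable_const.min measurable_id)).inv.aestronglyMeasurable
      (Eventually.of_forall fun u => norm_inv_survival_le_of_le hz (min_le_left z u))
  simp_rw [mul_sub, mul_one]
  rw [integral_sub hint hf, ← integral_add_compl measurableSet_Iic hint, compl_Iic,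
    ← integral_const_mul]
  congr 2
  · exact setIntegral_congr_fun measurableSet_Iic fun u hu => by rw [min_eq_right hu]
  · exact setIntegral_congr_fun measurableSet_Ioi fun u hu => by
      rw [min_eq_left (le_of_lt hu), mul_comm]

variable [NullSingletonClass F]

lemma continuous_survival : Continuous (survival F) := by
  rw [survival_eq_one_sub_cdf]
  exact continuous_const.sub (continuous_cdf F)

/- `{S ≤ x}` is a closed up-set, hence some `Ici a`, and continuity of `S` forces `S a = x`. -/
lemma measure_survival_le {x : ℝ} (hx0 : 0 ≤ x) (hx1 : x < 1) :
    F {s | survival F s ≤ x} = ENNReal.ofReal x := by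
  set U := {s | survival F s ≤ x}
  rcases U.eq_empty_or_nonempty with hU | hU
  · suffices x = 0 by rw [hU, measure_empty, this, ENNReal.ofReal_zero]
    refine le_antisymm (not_lt.1 fun hx => ?_) hx0
    obtain ⟨s, hs⟩ := ((tendsto_survival_atTop (F := F)).eventually (gt_mem_nhds hx)).exists
    exact hU.subset hs.le
  have hbdd : BddBelow U := by
    obtain ⟨b, hb⟩ :=
      eventually_atBot.1 ((tendsto_survival_atBot (F := F)).eventually (lt_mem_nhds hx1))
    exact ⟨b, fun s hs => le_of_not_ge fun hsb => (hb s hsb).not_ge hs⟩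
  set a := sInf U
  have hUa : U = Ici a := by
    refine Subset.antisymm (fun s hs => csInf_le hbdd hs) fun s hs => ?_
    exact (antitone_survival hs).trans (isClosed_le continuous_survival continuous_const
      |>.csInf_mem hU hbdd)
  have hSa : survival F a = x := by
    refine le_antisymm (hUa.ge self_mem_Ici) (ge_of_tendsto
      ((continuous_survival.tendsto a).mono_left (nhdsWithin_le_nhds (s := Iio a))) ?_)
    filter_upwards [self_mem_nhdsWithin] with s hs
    exact le_of_lt (not_le.1 fun h => (mem_Ici.1 (hUa.le h)).not_gt hs)
  rw [hUa, ← measure_congr Ioi_ae_eq_Ici, ← ofReal_survival, hSa]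

lemma map_survival : F.map (survival F) = volume.restrict (Icc 0 1) := by
  have := Measure.isProbabilityMeasure_map (μ := F) (measurable_survival (F := F)).aemeasurable
  refine Measure.ext_of_Iic _ _ fun x => ?_
  rw [Measure.map_apply measurable_survival measurableSet_Iic,
    Measure.restrict_apply measurableSet_Iic, ← Ici_inter_Iic, inter_left_comm, Iic_inter_Iic,
    Ici_inter_Iic, Real.volume_Icc, sub_zero]
  rcases lt_or_ge x 0 with hx0 | hx0
  · rw [ENNReal.ofReal_of_nonpos (min_le_of_left_le hx0.le), ← measure_empty (μ := F)]
    exact congrArg F (eq_empty_of_forall_notMem fun s hs =>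
      (hx0.trans_le (survival_nonneg F s)).not_ge hs)
  rcases lt_or_ge x 1 with hx1 | hx1
  · rw [min_eq_left hx1.le]
    exact measure_survival_le hx0 hx1
  · rw [min_eq_right hx1, ENNReal.ofReal_one, ← measure_univ (μ := F)]
    exact congrArg F (eq_univ_of_forall fun s => (survival_le_one s).trans hx1)

lemma ae_survival_pos : ∀ᵐ z ∂F, 0 < survival F z := by
  simpa [ae_iff] using measure_survival_le (F := F) le_rfl one_pos

lemma measure_survival_preimage_Ici {c : ℝ} (hc0 : 0 ≤ c) :
    F (survival F ⁻¹' Ici c) = ENNReal.ofReal (1 - c) := by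
  rw [← Measure.map_apply measurable_survival measurableSet_Ici, map_survival,
    Measure.restrict_apply measurableSet_Ici, ← Ici_inter_Iic, ← inter_assoc, Ici_inter_Ici,
    Ici_inter_Iic, max_eq_left hc0, Real.volume_Icc]

lemma Iic_ae_eq_survival_preimage (t : ℝ) :
    Iic t =ᵐ[F] survival F ⁻¹' Ici (survival F t) := by
  refine ae_eq_of_subset_of_measure_ge (fun s hs => antitone_survival hs) ?_
    measurableSet_Iic.nullMeasurableSet (measure_ne_top _ _)
  rw [measure_survival_preimage_Ici (survival_nonneg F t), ← ofReal_measureReal,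
    ← compl_Ioi, probReal_compl_eq_one_sub measurableSet_Ioi, survival]

lemma setIntegral_Iic_inv_survival_sq {t : ℝ} (ht : 0 < survival F t) :
    ∫ s in Iic t, (survival F s)⁻¹ ^ 2 ∂F = (survival F t)⁻¹ - 1 := by
  have hc1 : survival F t ≤ 1 := survival_le_one t
  rw [setIntegral_congr_set (Iic_ae_eq_survival_preimage t), ← setIntegral_map measurableSet_Ici
    (measurable_inv.pow_const 2).aestronglyMeasurable measurable_survival.aemeasurable,
    map_survival, Measure.restrict_restrict measurableSet_Ici, ← Ici_inter_Iic, ← inter_assoc,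
    Ici_inter_Ici, Ici_inter_Iic, max_eq_left ht.le, integral_Icc_eq_integral_Ioc,
    ← intervalIntegral.integral_of_le hc1]
  simp_rw [← zpow_natCast, ← zpow_neg_one, ← zpow_mul]
  rw [integral_zpow (Or.inr ⟨by norm_num, by simp [uIcc_of_le hc1, ht.not_ge]⟩)]
  norm_num
  ring

lemma setIntegral_Iic_inter_Iio_inv_survival_sq {z : ℝ} (hz : 0 < survival F z) (u : ℝ) :
    ∫ s in Iic z ∩ Iio u, (survival F s)⁻¹ ^ 2 ∂F = (survival F (min z u))⁻¹ - 1 := by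
  rw [setIntegral_congr_set ((EventuallyEq.refl _ (Iic z)).inter Iio_ae_eq_Iic), Iic_inter_Iic]
  exact setIntegral_Iic_inv_survival_sq (hz.trans_le (antitone_survival (min_le_left z u)))

lemma setIntegral_inv_survival_sq_mul_tail (hf : Integrable f F) {z : ℝ}
    (hz : 0 < survival F z) :
    ∫ s in Iic z, (survival F s)⁻¹ ^ 2 * ∫ u in Ioi s, f u ∂F ∂F
      = ∫ u, f u * ((survival F (min z u))⁻¹ - 1) ∂F := by
  rw [← integral_indicator measurableSet_Iic]
  simp_rw [← integral_indicator_Iic_inter_Iio_mul]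
  rw [integral_integral_swap (integrable_indicator_inv_survival_sq_mul hf hz)]
  simp_rw [integral_mul_const, integral_indicator (measurableSet_Iic.inter measurableSet_Iio),
    setIntegral_Iic_inter_Iio_inv_survival_sq hz, mul_comm]

lemma setIntegral_Iic_advancedOp_mul_inv_survival (hf : Integrable f F) {z : ℝ}
    (hz : 0 < survival F z) :
    ∫ s in Iic z, advancedOp F f s * (survival F s)⁻¹ ∂F
      = ∫ u, f u ∂F - (survival F z)⁻¹ * ∫ u in Ioi z, f u ∂F := by
  have hfS : IntegrableOn (fun s => f s * (survival F s)⁻¹) (Iic z) F :=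
    hf.integrableOn.mul_bdd measurable_survival.inv.aestronglyMeasurable
      ((ae_restrict_iff' measurableSet_Iic).2
        (Eventually.of_forall fun _ hs => norm_inv_survival_le_of_le hz hs))
  have hsplit : ∫ s in Iic z, advancedOp F f s * (survival F s)⁻¹ ∂F
      = ∫ s in Iic z, f s * (survival F s)⁻¹ ∂F
        - ∫ s in Iic z, (survival F s)⁻¹ ^ 2 * ∫ u in Ioi s, f u ∂F ∂F := by
    rw [← integral_sub hfS (integrableOn_inv_survival_sq_mul_tail hf hz)]
    congr 1 with s
    rw [advancedOp]
    ring
  rw [hsplit, setIntegral_inv_survival_sq_mul_tail hf hz,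
    integral_mul_inv_survival_min_sub_one hf hz]
  ring

lemma backwardOp_advancedOp_ae_eq (hF : F (Ioi 0) = 1) (hf : Integrable f F) :
    ∀ᵐ z ∂F, backwardOp F (advancedOp F f) z = f z - ∫ u, f u ∂F := by
  filter_upwards [ae_survival_pos] with z hz
  rw [backwardOp, setIntegral_congr_set (Ioc_ae_eq_Iic_of_measure_Ioi hF z),
    setIntegral_Iic_advancedOp_mul_inv_survival hf hz, advancedOp]
  ring

end Survival

end

/-- Applying the backward operator after the advanced operator recenters:
`B(Af)(z) = f(z) - ∫ f dF` for `F`-almost every `z`; in particular, if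
`∫ f dF = 0` then `B(Af) = f` `F`-almost everywhere. Here
`(Af)(z) = f(z) - S(z)⁻¹ ∫_{(z,∞)} f dF` and
`(Bf)(z) = f(z) - ∫_{(0,z]} f(s) S(s)⁻¹ dF(s)`, with `S(t) = F((t,∞))`. -/
theorem backward_advanced_recenters (F : Measure ℝ) [IsProbabilityMeasure F]
    [NullSingletonClass F] (hF : F (Set.Ioi (0 : ℝ)) = 1)
    (f : ℝ → ℝ) (hf : MemLp f 2 F) :
    (∀ᵐ z ∂F,
      (f z - ((F (Set.Ioi z)).toReal)⁻¹ * ∫ u in Set.Ioi z, f u ∂F)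
        - ∫ s in Set.Ioc 0 z,
            (f s - ((F (Set.Ioi s)).toReal)⁻¹ * ∫ u in Set.Ioi s, f u ∂F)
              * ((F (Set.Ioi s)).toReal)⁻¹ ∂F
      = f z - ∫ w, f w ∂F) ∧
    ((∫ w, f w ∂F) = 0 →
      ∀ᵐ z ∂F,
        (f z - ((F (Set.Ioi z)).toReal)⁻¹ * ∫ u in Set.Ioi z, f u ∂F)
          - ∫ s in Set.Ioc 0 z,
              (f s - ((F (Set.Ioi s)).toReal)⁻¹ * ∫ u in Set.Ioi s, f u ∂F)
                * ((F (Set.Ioi s)).toReal)⁻¹ ∂F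
        = f z) := by
  have h := backwardOp_advancedOp_ae_eq hF (hf.integrable one_le_two)
  refine ⟨h, fun h0 => ?_⟩
  filter_upwards [h] with z hz
  exact hz.trans (by rw [h0, sub_zero])
end

section
/- Let F be an atomless Borel probability measure on ℝ and S(t) := F((t,∞)) its survival function. For every t ∈ ℝ with S(t) > 0, one has ∫_{(−∞,t]} S(s)⁻² dF(s) = S(t)⁻¹ − 1. -/
/-!
Since `F` has no atoms, its cdf `G` is continuous, and then `G` pushes `F` forward to the uniform
distribution on `[0, 1]` (the probability integral transform). As `S = 1 - G` and `(-∞, t]` agrees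
`F`-a.e. with `{G ≤ G t}`, the integral becomes `∫₀^{G t} (1 - x)⁻² dx = (1 - G t)⁻¹ - 1`.
-/

open MeasureTheory Set Filter ProbabilityTheory

lemma Set.Iic_inter_Icc_of_le {α : Type*} [LinearOrder α] {a b c : α} (h : c ≤ b) :
    Iic c ∩ Icc a b = Icc a c := by
  ext x
  simp only [mem_inter_iff, mem_Iic, mem_Icc]
  grind

lemma integral_inv_one_sub_sq {a : ℝ} (ha : a < 1) :
    ∫ x in (0 : ℝ)..a, ((1 - x) ^ 2)⁻¹ = (1 - a)⁻¹ - 1 := by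
  have h0 : (0 : ℝ) ∉ uIcc (1 - a) 1 := by
    simp only [mem_uIcc, not_or, not_and, not_le]
    constructor <;> intro <;> linarith
  simp_rw [intervalIntegral.integral_comp_sub_left (fun x ↦ (x ^ 2)⁻¹), sub_zero, ← zpow_natCast,
    ← zpow_neg]
  rw [integral_zpow (Or.inr ⟨by norm_num, h0⟩)]
  norm_num
  ring

namespace ProbabilityTheory

variable {μ : Measure ℝ} [IsProbabilityMeasure μ]

lemma measureReal_Ioi_eq_one_sub_cdf (x : ℝ) : μ.real (Ioi x) = 1 - cdf μ x := by
  rw [← compl_Iic, probReal_compl_eq_one_sub measurableSet_Iic, cdf_eq_real]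

variable [NullSingletonClass μ]

lemma continuous_cdf_s6 : Continuous (cdf μ) := by
  refine continuous_iff_continuousAt.2 fun x ↦ continuousAt_iff_continuous_left_right.2
    ⟨continuousWithinAt_Iio_iff_Iic.1 ?_, (cdf μ).right_continuous x⟩
  have hjump : ENNReal.ofReal (cdf μ x - Function.leftLim (cdf μ) x) = 0 := by
    rw [← StieltjesFunction.measure_singleton, measure_cdf, measure_singleton]
  refine (monotone_cdf μ).continuousWithinAt_Iio_iff_leftLim_eq.2
    (le_antisymm ((monotone_cdf μ).leftLim_le le_rfl) ?_)
  linarith [ENNReal.ofReal_eq_zero.1 hjump]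

lemma measure_cdf_preimage_Iic {u : ℝ} (hu : u < 1) :
    μ (cdf μ ⁻¹' Iic u) = ENNReal.ofReal u := by
  set A := cdf μ ⁻¹' Iic u
  rcases A.eq_empty_or_nonempty with hA | hA
  · have hu₀ : u ≤ 0 := ge_of_tendsto' (tendsto_cdf_atBot μ) fun x ↦
      (not_le.1 fun hx ↦ hA.subset (show x ∈ A from hx)).le
    simp [hA, ENNReal.ofReal_of_nonpos hu₀]
  obtain ⟨b, hb⟩ := eventually_atTop.1 ((tendsto_order.1 (tendsto_cdf_atTop μ)).1 u hu)
  have hA_bdd : BddAbove A := ⟨b, fun x hx ↦ le_of_not_gt fun hbx ↦ (hb x hbx.le).not_ge hx⟩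
  have hc : sSup A ∈ A := (isClosed_Iic.preimage continuous_cdf_s6).csSup_mem hA hA_bdd
  have hA_eq : A = Iic (sSup A) :=
    Subset.antisymm (fun x hx ↦ le_csSup hA_bdd hx) fun x hx ↦ (monotone_cdf μ hx).trans hc
  obtain ⟨x, hx⟩ : u ∈ range (cdf μ) :=
    mem_range_of_exists_le_of_exists_ge continuous_cdf_s6 hA ⟨b, (hb b le_rfl).le⟩
  have hcu : cdf μ (sSup A) = u :=
    le_antisymm hc (hx ▸ monotone_cdf μ (le_csSup hA_bdd (show x ∈ A from hx.le)))
  rw [hA_eq, ← ofReal_cdf, hcu]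

lemma map_cdf : μ.map (cdf μ) = volume.restrict (Icc 0 1) := by
  refine Measure.ext_of_Iic _ _ fun u ↦ ?_
  rw [Measure.map_apply (monotone_cdf μ).measurable measurableSet_Iic,
    Measure.restrict_apply measurableSet_Iic]
  rcases lt_or_ge u 1 with hu | hu
  · rw [measure_cdf_preimage_Iic hu, Iic_inter_Icc_of_le hu.le, Real.volume_Icc, sub_zero]
  · have hpre : cdf μ ⁻¹' Iic u = univ := eq_univ_of_forall fun x ↦ (cdf_le_one μ x).trans hu
    rw [hpre, inter_eq_right.2 (Icc_subset_Iic_self.trans (Iic_subset_Iic.2 hu))]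
    simp

lemma cdf_preimage_Iic_cdf_ae_eq_Iic (x : ℝ) : cdf μ ⁻¹' Iic (cdf μ x) =ᵐ[μ] Iic x := by
  have hlevel : μ (cdf μ ⁻¹' {cdf μ x}) = 0 := by
    rw [← Measure.map_apply (monotone_cdf μ).measurable (measurableSet_singleton _), map_cdf,
      measure_singleton]
  refine (ae_le_set.2 (measure_mono_null (fun y hy ↦ ?_) hlevel)).antisymm
    (LE.le.eventuallyLE fun y hy ↦ monotone_cdf μ hy)
  exact le_antisymm hy.1 (monotone_cdf μ (le_of_not_ge hy.2))

end ProbabilityTheory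

/-- For an atomless Borel probability measure `F` on `ℝ` with survival function
`S(t) = F((t,∞))`, whenever `S(t) > 0` one has
`∫_{(-∞,t]} S(s)⁻² dF(s) = S(t)⁻¹ - 1`. -/
theorem integral_inv_sq_survival (F : Measure ℝ) [IsProbabilityMeasure F]
    [NullSingletonClass F] (t : ℝ) (ht : 0 < (F (Set.Ioi t)).toReal) :
    ∫ s in Set.Iic t, (((F (Set.Ioi s)).toReal) ^ 2)⁻¹ ∂F
      = ((F (Set.Ioi t)).toReal)⁻¹ - 1 := by
  simp only [← measureReal_def, measureReal_Ioi_eq_one_sub_cdf] at ht ⊢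
  have hGt : cdf F t < 1 := by linarith
  calc ∫ s in Iic t, ((1 - cdf F s) ^ 2)⁻¹ ∂F
      = ∫ s in cdf F ⁻¹' Iic (cdf F t), ((1 - cdf F s) ^ 2)⁻¹ ∂F :=
        setIntegral_congr_set (cdf_preimage_Iic_cdf_ae_eq_Iic t).symm
    _ = ∫ x in Iic (cdf F t), ((1 - x) ^ 2)⁻¹ ∂(F.map (cdf F)) :=
        (setIntegral_map measurableSet_Iic
          (by fun_prop : Measurable fun x : ℝ ↦ ((1 - x) ^ 2)⁻¹).aestronglyMeasurable
          (monotone_cdf F).measurable.aemeasurable).symm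
    _ = ∫ x in (0 : ℝ)..cdf F t, ((1 - x) ^ 2)⁻¹ := by
        rw [map_cdf, Measure.restrict_restrict measurableSet_Iic, Iic_inter_Icc_of_le hGt.le,
          integral_Icc_eq_integral_Ioc, intervalIntegral.integral_of_le (cdf_nonneg F t)]
    _ = (1 - cdf F t)⁻¹ - 1 := integral_inv_one_sub_sq hGt
end

section
/- For every f : ℝ → ℝ with f ∈ L²(F) and every z ∈ ℝ with S(z) > 0, one has ∫_{(z,∞)} (Bf)(s) dF(s) = −S(z) · ∫_{(0,z]} f(s)·S(s)⁻¹ dF(s). -/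
/-!
Write `S u = F (u, ∞)` and `g = f / S`. By Fubini,
`∫_{s > z} ∫_{u ≤ s} g(u) dF(u) dF(s) = ∫ F([u, ∞) ∩ (z, ∞)) g(u) dF(u)`,
and since `F` has no atoms the weight is `S z` for `u ≤ z` and `S u` for `u > z`.
As `S > 0` holds `F`-a.e., the part `u > z` returns `∫_{(z,∞)} f`, which cancels the first term
of `∫_{(z,∞)} Bf`, leaving `-S z ∫_{u ≤ z} g`. Because `F` lives on `(0, ∞)`, integrals over
`(0, s]` and over `(-∞, s]` agree.
-/

open MeasureTheory Set

/-- The null open rays `Ioi u` have a countable subfamily with the same union, so that union is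
null, and the set of `u` with `μ (Ioi u) = 0` exceeds it by at most one point. -/
theorem ae_measure_Ioi_ne_zero {α : Type*} [LinearOrder α] [TopologicalSpace α]
    [ClosedIicTopology α] [SecondCountableTopology α] [MeasurableSpace α]
    (μ : Measure α) [NullSingletonClass μ] :
    ∀ᵐ u ∂μ, μ (Ioi u) ≠ 0 := by
  set N := {u | μ (Ioi u) = 0}
  obtain ⟨T, hTN, hT, hTU⟩ :=
    TopologicalSpace.isOpen_biUnion_countable N Ioi fun u _ => isOpen_Ioi
  set U := ⋃ u ∈ N, Ioi u
  have hU : μ U = 0 := by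
    rw [← hTU, measure_biUnion_null_iff hT]
    exact fun u hu => hTN hu
  have hNU : (N \ U).Subsingleton := by
    intro u hu v hv
    simp only [U, mem_sdiff, mem_iUnion, mem_Ioi, not_exists, not_lt] at hu hv
    exact le_antisymm (hu.2 v hv.1) (hv.2 u hu.1)
  simp only [ae_iff, not_not]
  exact measure_mono_null (subset_union_right.trans union_sdiff_self.superset)
    (measure_union_null hU (hNU.measure_zero μ))

theorem indicator_Iic_apply_eq_indicator_Ici {α M : Type*} [LinearOrder α] [Zero M]
    (g : α → M) (s u : α) :
    (Iic s).indicator g u = (Ici u).indicator (fun _ => g u) s := by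
  by_cases h : u ≤ s <;> simp [h]

section IicFubini

variable {α E : Type*} [LinearOrder α] [TopologicalSpace α] [OrderClosedTopology α]
  [MeasurableSpace α] [OpensMeasurableSpace α]
  [NormedAddCommGroup E] [NormedSpace ℝ E]
  {μ ν : Measure α} {g : α → E}

theorem integral_indicator_Iic_apply [CompleteSpace E] (g : α → E) (u : α) :
    ∫ s, (Iic s).indicator g u ∂ν = ν.real (Ici u) • g u := by
  simp_rw [indicator_Iic_apply_eq_indicator_Ici g _ u]
  exact integral_indicator_const _ measurableSet_Ici

variable [SecondCountableTopology α] [SFinite μ] [IsFiniteMeasure ν]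

theorem integrable_indicator_Iic_prod (hg : AEStronglyMeasurable g μ)
    (hw : Integrable (fun u => ν.real (Ici u) • g u) μ) :
    Integrable (fun p : α × α => (Iic p.1).indicator g p.2) (ν.prod μ) := by
  have hmeas : AEStronglyMeasurable (fun p : α × α => (Iic p.1).indicator g p.2) (ν.prod μ) :=
    hg.comp_snd.indicator (measurableSet_le measurable_snd measurable_fst)
  refine (integrable_prod_iff' hmeas).2 ⟨ae_of_all _ fun u => ?_, ?_⟩
  · simp_rw [indicator_Iic_apply_eq_indicator_Ici g _ u]
    exact (integrable_const _).indicator measurableSet_Ici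
  · refine hw.norm.congr (ae_of_all _ fun u => ?_)
    simp_rw [norm_indicator_eq_indicator_norm, integral_indicator_Iic_apply, norm_smul,
      Real.norm_of_nonneg measureReal_nonneg, smul_eq_mul]

theorem integrable_setIntegral_Iic (hg : AEStronglyMeasurable g μ)
    (hw : Integrable (fun u => ν.real (Ici u) • g u) μ) :
    Integrable (fun s => ∫ u in Iic s, g u ∂μ) ν := by
  simp_rw [← integral_indicator measurableSet_Iic]
  exact (integrable_indicator_Iic_prod hg hw).integral_prod_left

theorem integral_setIntegral_Iic [CompleteSpace E] (hg : AEStronglyMeasurable g μ)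
    (hw : Integrable (fun u => ν.real (Ici u) • g u) μ) :
    ∫ s, ∫ u in Iic s, g u ∂μ ∂ν = ∫ u, ν.real (Ici u) • g u ∂μ := by
  simp_rw [← integral_indicator measurableSet_Iic, ← integral_indicator_Iic_apply]
  exact integral_integral_swap (integrable_indicator_Iic_prod hg hw)

end IicFubini

section Survival

variable {F : Measure ℝ} {f : ℝ → ℝ} {u z : ℝ}

theorem measureReal_restrict_Ioi_Ici_of_le (h : u ≤ z) :
    (F.restrict (Ioi z)).real (Ici u) = F.real (Ioi z) := by
  rw [measureReal_restrict_apply measurableSet_Ici,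
    inter_eq_self_of_subset_right (Ioi_subset_Ici_self.trans (Ici_subset_Ici.2 h))]

theorem measureReal_restrict_Ioi_Ici_of_lt [NullSingletonClass F] (h : z < u) :
    (F.restrict (Ioi z)).real (Ici u) = F.real (Ioi u) := by
  rw [measureReal_restrict_apply measurableSet_Ici,
    inter_eq_self_of_subset_left (Ici_subset_Ioi.2 h), measureReal_congr Ioi_ae_eq_Ici.symm]

variable [IsFiniteMeasure F]

theorem antitone_measureReal_Ioi : Antitone fun t => F.real (Ioi t) :=
  fun _ _ h => measureReal_mono (Ioi_subset_Ioi h)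

theorem aestronglyMeasurable_mul_inv_measureReal_Ioi (hf : AEStronglyMeasurable f F) :
    AEStronglyMeasurable (fun u => f u * (F.real (Ioi u))⁻¹) F :=
  hf.mul antitone_measureReal_Ioi.measurable.inv.aestronglyMeasurable

theorem integrableOn_Iic_mul_inv_measureReal_Ioi (hf : Integrable f F)
    (hz : 0 < F.real (Ioi z)) :
    IntegrableOn (fun u => f u * (F.real (Ioi u))⁻¹) (Iic z) F := by
  refine (hf.norm.integrableOn.mul_const (F.real (Ioi z))⁻¹).mono'
    (aestronglyMeasurable_mul_inv_measureReal_Ioi hf.1).restrict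
    ((ae_restrict_iff' measurableSet_Iic).2 (ae_of_all _ fun u hu => ?_))
  rw [norm_mul, norm_inv, Real.norm_of_nonneg measureReal_nonneg]
  exact mul_le_mul_of_nonneg_left (inv_anti₀ hz (antitone_measureReal_Ioi hu)) (norm_nonneg _)

theorem measureReal_Ioi_mul_mul_inv_ae_eq [NullSingletonClass F] (f : ℝ → ℝ) :
    ∀ᵐ u ∂F, F.real (Ioi u) * (f u * (F.real (Ioi u))⁻¹) = f u := by
  filter_upwards [ae_measure_Ioi_ne_zero F] with u hu
  rw [mul_comm, mul_assoc, inv_mul_cancel₀ ((measureReal_ne_zero_iff).2 hu), mul_one]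

theorem setIntegral_Ioi_sub_setIntegral_Iic_hazard [NullSingletonClass F]
    (hf : Integrable f F) (hz : 0 < F.real (Ioi z)) :
    ∫ s in Ioi z, (f s - ∫ u in Iic s, f u * (F.real (Ioi u))⁻¹ ∂F) ∂F
      = -F.real (Ioi z) * ∫ u in Iic z, f u * (F.real (Ioi u))⁻¹ ∂F := by
  set g := fun u => f u * (F.real (Ioi u))⁻¹
  have hgm : AEStronglyMeasurable g F := aestronglyMeasurable_mul_inv_measureReal_Ioi hf.1
  have hw_Iic : EqOn (fun u => (F.restrict (Ioi z)).real (Ici u) • g u)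
      (fun u => F.real (Ioi z) * g u) (Iic z) :=
    fun u hu => by simp only [smul_eq_mul, measureReal_restrict_Ioi_Ici_of_le hu]
  have hw_Ioi : (fun u => (F.restrict (Ioi z)).real (Ici u) • g u) =ᵐ[F.restrict (Ioi z)] f := by
    filter_upwards [ae_restrict_of_ae (measureReal_Ioi_mul_mul_inv_ae_eq f),
      ae_restrict_mem measurableSet_Ioi] with u hu hzu
    rw [smul_eq_mul, measureReal_restrict_Ioi_Ici_of_lt hzu, hu]
  have hw : Integrable (fun u => (F.restrict (Ioi z)).real (Ici u) • g u) F := by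
    have := (IntegrableOn.congr_fun ((integrableOn_Iic_mul_inv_measureReal_Ioi hf hz).const_mul _)
      hw_Iic.symm measurableSet_Iic).union (hf.integrableOn.congr_fun_ae hw_Ioi.symm)
    rwa [Iic_union_Ioi, integrableOn_univ] at this
  rw [integral_sub hf.integrableOn (integrable_setIntegral_Iic hgm hw),
    integral_setIntegral_Iic hgm hw, ← intervalIntegral.integral_Iic_add_Ioi hw.integrableOn
      hw.integrableOn, setIntegral_congr_fun measurableSet_Iic hw_Iic, integral_congr_ae hw_Ioi,
    integral_const_mul]
  ring

end Survival

theorem setIntegral_Ioc_eq_setIntegral_Iic {α E : Type*} [LinearOrder α] [MeasurableSpace α]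
    [NormedAddCommGroup E] [NormedSpace ℝ E] {μ : Measure α} {a : α} (h : μ (Iic a) = 0)
    (g : α → E) (s : α) : ∫ u in Ioc a s, g u ∂μ = ∫ u in Iic s, g u ∂μ :=
  setIntegral_congr_set (by rw [← Iic_sdiff_Iic]; exact sdiff_null_ae_eq_self h)

/-- Tail integral of the backward operator: for `f ∈ L²(F)` and any `z` with
`S(z) > 0`, `∫_{(z,∞)} (Bf)(s) dF(s) = -S(z) ∫_{(0,z]} f(s) S(s)⁻¹ dF(s)`,
where `(Bf)(s) = f(s) - ∫_{(0,s]} f(u) S(u)⁻¹ dF(u)` and `S(t) = F((t,∞))`. -/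
theorem integral_backward_tail (F : Measure ℝ) [IsProbabilityMeasure F]
    [NullSingletonClass F] (hF : F (Set.Ioi (0 : ℝ)) = 1)
    (f : ℝ → ℝ) (hf : MemLp f 2 F)
    (z : ℝ) (hz : 0 < (F (Set.Ioi z)).toReal) :
    ∫ s in Set.Ioi z,
        (f s - ∫ u in Set.Ioc 0 s, f u * ((F (Set.Ioi u)).toReal)⁻¹ ∂F) ∂F
      = -(F (Set.Ioi z)).toReal * ∫ s in Set.Ioc 0 z, f s * ((F (Set.Ioi s)).toReal)⁻¹ ∂F := by
  have hF0 : F (Iic 0) = 0 := by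
    rwa [← compl_Ioi, prob_compl_eq_zero_iff measurableSet_Ioi]
  simp_rw [setIntegral_Ioc_eq_setIntegral_Iic hF0]
  exact setIntegral_Ioi_sub_setIntegral_Iic_hazard (hf.integrable one_le_two) hz
end
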